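/- Let v : ℝ^n → ℝ^d be continuous, μ ≥ 0, q > 0, and define the set function Φ(E) = inf over countable covers of E by compact sets {D_j} of Σ_j (diam D_j)^μ (diam v(D_j))^q. If Φ(E) = 0, then H^μ(E ∩ v^{-1}(y)) = 0 for H^q-almost all y ∈ ℝ^d. -/

import Mathlib

open MeasureTheory ENNReal Filter Topology

namespace HKKaux

variable {d : ℕ}

/-- Dyadic cube addresses: level and integer coordinates. -/
abbrev Cube (d : ℕ) := ℕ × (Fin d → ℤ)

/-- floor coordinates of a point at level `l` -/
noncomputable def fl (l : ℕ) (y : EuclideanSpace ℝ (Fin d)) (t : Fin d) : ℤ :=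
  ⌊(2:ℝ)^l * y t⌋

/-- the (half-open) cube as a set -/
def cset (Q : Cube d) : Set (EuclideanSpace ℝ (Fin d)) := {y | fl Q.1 y = Q.2}

noncomputable def chain (y : EuclideanSpace ℝ (Fin d)) (l : ℕ) : Cube d := (l, fl l y)

def up (k : ℕ) (Q : Cube d) : Cube d := (Q.1 - k, fun t => Q.2 t / (2^k : ℤ))

def child (Q : Cube d) (δ : Fin d → Bool) : Cube d :=
  (Q.1 + 1, fun t => 2 * Q.2 t + (if δ t then 1 else 0))

lemma mem_cset_chain (y : EuclideanSpace ℝ (Fin d)) (l : ℕ) : y ∈ cset (chain y l) := rfl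

lemma chain_eq_of_mem {y : EuclideanSpace ℝ (Fin d)} {Q : Cube d} (h : y ∈ cset Q) :
    chain y Q.1 = Q := by
  cases Q with
  | mk l z => exact Prod.ext rfl h

/-- key floor halving lemma -/
lemma floor_pow_div (y : ℝ) (l k : ℕ) :
    ⌊(2:ℝ)^l * y⌋ = ⌊(2:ℝ)^(l+k) * y⌋ / (2^k : ℤ) := by
  set m : ℤ := ⌊(2:ℝ)^(l+k) * y⌋ with hm
  set e : ℤ := m / (2^k : ℤ) with he
  have h2k : (0:ℤ) < 2^k := by positivity
  have hr0 : (0:ℤ) ≤ m % (2^k : ℤ) := Int.emod_nonneg m (by positivity)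
  have hr1 : m % (2^k : ℤ) < 2^k := Int.emod_lt_of_pos m h2k
  have hme : (2^k : ℤ) * e + m % (2^k : ℤ) = m := Int.mul_ediv_add_emod m _
  have h2kR : (0:ℝ) < (2:ℝ)^k := by positivity
  refine Int.floor_eq_iff.mpr ⟨?_, ?_⟩
  · -- (e : ℝ) ≤ 2^l y
    have h1 : ((2^k : ℤ) * e : ℝ) ≤ (m : ℝ) := by
      have : ((2^k : ℤ) * e : ℤ) ≤ m := by omega
      exact_mod_cast this
    have h2 : (m : ℝ) ≤ (2:ℝ)^(l+k) * y := Int.floor_le _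
    have h3 : ((2:ℝ)^k) * (e : ℝ) ≤ (2:ℝ)^k * ((2:ℝ)^l * y) := by
      calc ((2:ℝ)^k) * (e : ℝ) = ((2^k : ℤ) * e : ℝ) := by push_cast; ring
      _ ≤ (2:ℝ)^(l+k) * y := le_trans h1 h2
      _ = (2:ℝ)^k * ((2:ℝ)^l * y) := by rw [pow_add]; ring
    exact le_of_mul_le_mul_left h3 h2kR
  · -- 2^l y < e + 1
    have h2 : (2:ℝ)^(l+k) * y < (m : ℝ) + 1 := Int.lt_floor_add_one _
    have h1 : (m : ℝ) + 1 ≤ ((2:ℝ)^k) * ((e : ℝ) + 1) := by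
      have : m + 1 ≤ (2^k : ℤ) * (e + 1) := by nlinarith [hme, hr1]
      calc (m : ℝ) + 1 = ((m + 1 : ℤ) : ℝ) := by push_cast; ring
      _ ≤ (((2^k : ℤ) * (e + 1) : ℤ) : ℝ) := by exact_mod_cast this
      _ = ((2:ℝ)^k) * ((e : ℝ) + 1) := by push_cast; ring
    have h3 : (2:ℝ)^k * ((2:ℝ)^l * y) < (2:ℝ)^k * ((e:ℝ) + 1) := by
      calc (2:ℝ)^k * ((2:ℝ)^l * y) = (2:ℝ)^(l+k) * y := by rw [pow_add]; ring
      _ < (m : ℝ) + 1 := h2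
      _ ≤ _ := h1
    exact lt_of_mul_lt_mul_left h3 (le_of_lt h2kR)

lemma up_chain (y : EuclideanSpace ℝ (Fin d)) {l k : ℕ} (hk : k ≤ l) :
    up k (chain y l) = chain y (l - k) := by
  unfold up chain
  refine Prod.ext rfl ?_
  funext t
  show fl l y t / (2^k : ℤ) = fl (l - k) y t
  unfold fl
  rw [floor_pow_div (y t) (l - k) k, Nat.sub_add_cancel hk]

lemma up_zero (Q : Cube d) : up 0 Q = Q := by
  unfold up
  refine Prod.ext rfl ?_
  funext t
  simp

lemma int_ediv_ediv (z : ℤ) (k j : ℕ) : z / 2^k / 2^j = z / 2^(k+j) := by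
  have hk : (0:ℤ) < 2^k := by positivity
  have hj : (0:ℤ) < 2^j := by positivity
  set e : ℤ := z / 2^(k+j) with he
  set r : ℤ := z % 2^(k+j) with hr
  have hz : (2^(k+j) : ℤ) * e + r = z := Int.mul_ediv_add_emod z _
  have hr0 : (0:ℤ) ≤ r := Int.emod_nonneg z (by positivity)
  have hr1 : r < 2^(k+j) := Int.emod_lt_of_pos z (by positivity)
  have step1 : z / 2^k = r / 2^k + 2^j * e := by
    have : z = r + 2^k * (2^j * e) := by rw [← hz, pow_add]; ring
    rw [this, Int.add_mul_ediv_left _ _ (ne_of_gt hk)]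
  have hrk0 : (0:ℤ) ≤ r / 2^k := Int.ediv_nonneg hr0 (le_of_lt hk)
  have hrk1 : r / 2^k < 2^j := by
    rw [Int.ediv_lt_iff_lt_mul hk]
    calc r < 2^(k+j) := hr1
    _ = 2^j * 2^k := by rw [pow_add]; ring
  have step2 : (r / 2^k + 2^j * e) / 2^j = e := by
    rw [Int.add_mul_ediv_left _ _ (ne_of_gt hj), Int.ediv_eq_zero_of_lt hrk0 hrk1]
    ring
  rw [step1, step2]

lemma up_up (j k : ℕ) (Q : Cube d) : up j (up k Q) = up (k + j) Q := by
  unfold up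
  refine Prod.ext ?_ ?_
  · show Q.1 - k - j = Q.1 - (k + j)
    omega
  · funext t
    exact int_ediv_ediv (Q.2 t) k j

lemma cset_subset_up {Q : Cube d} (k : ℕ) (hk : k ≤ Q.1) : cset Q ⊆ cset (up k Q) := by
  intro y hy
  have h1 : chain y Q.1 = Q := chain_eq_of_mem hy
  have h2 : up k (chain y Q.1) = chain y (Q.1 - k) := up_chain y hk
  rw [h1] at h2
  rw [h2]
  exact mem_cset_chain y (Q.1 - k)

/-- the unique level-l cube containing y is chain y l -/
lemma eq_chain_of_mem {y : EuclideanSpace ℝ (Fin d)} {Q : Cube d} (h : y ∈ cset Q) :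
    Q = chain y Q.1 := (chain_eq_of_mem h).symm

lemma up_one_child (Q : Cube d) (δ : Fin d → Bool) : up 1 (child Q δ) = Q := by
  unfold up child
  refine Prod.ext rfl ?_
  funext t
  show (2 * Q.2 t + (if δ t then 1 else 0)) / (2^1 : ℤ) = Q.2 t
  rcases ite_eq_or_eq (δ t) (1:ℤ) 0 with h | h <;> rw [h] <;> omega

lemma exists_child {Q : Cube d} {l : ℕ} (hl : Q.1 = l + 1) :
    ∃ δ : Fin d → Bool, child (up 1 Q) δ = Q := by
  refine ⟨fun t => decide (Q.2 t % 2 = 1), ?_⟩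
  unfold child up
  refine Prod.ext ?_ ?_
  · show Q.1 - 1 + 1 = Q.1
    omega
  · funext t
    simp only [pow_one]
    have h0 : (0:ℤ) ≤ Q.2 t % 2 := Int.emod_nonneg _ (by norm_num)
    have h1 : Q.2 t % 2 < 2 := Int.emod_lt_of_pos _ (by norm_num)
    have h2 : 2 * (Q.2 t / 2) + Q.2 t % 2 = Q.2 t := Int.mul_ediv_add_emod (Q.2 t) 2
    split_ifs with h
    · rw [decide_eq_true_eq] at h
      omega
    · rw [decide_eq_true_eq] at h
      omega

lemma child_injective (Q : Cube d) : Function.Injective (child Q) := by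
  intro δ δ' h
  funext t
  have := congrArg (fun C : Cube d => C.2 t) h
  simp only [child] at this
  rcases Bool.dichotomy (δ t) with h1 | h1 <;> rcases Bool.dichotomy (δ' t) with h2 | h2 <;>
    simp [h1, h2] at this ⊢ <;> omega


noncomputable def szR (l : ℕ) : ℝ := ((2:ℝ)^l)⁻¹

lemma szR_pos (l : ℕ) : 0 < szR l := by unfold szR; positivity

noncomputable def costq (q : ℝ) (Q : Cube d) : ℝ≥0∞ :=
  (ENNReal.ofReal (Real.sqrt d * szR Q.1)) ^ q

lemma costq_ne_top {q : ℝ} (hq : 0 < q) (Q : Cube d) : costq q Q ≠ ⊤ := by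
  unfold costq
  exact ENNReal.rpow_ne_top_of_nonneg (le_of_lt hq) ENNReal.ofReal_ne_top

lemma coord_dist_le (x y : EuclideanSpace ℝ (Fin d)) (t : Fin d) :
    dist (x t) (y t) ≤ dist x y := by
  rw [EuclideanSpace.dist_eq]
  have h1 : dist (x t) (y t) = Real.sqrt (dist (x t) (y t) ^ 2) :=
    (Real.sqrt_sq dist_nonneg).symm
  rw [h1]
  apply Real.sqrt_le_sqrt
  exact Finset.single_le_sum (f := fun i => dist (x i) (y i) ^ 2)
    (fun i _ => sq_nonneg _) (Finset.mem_univ t)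

lemma dist_le_of_mem_cset {Q : Cube d} {x y : EuclideanSpace ℝ (Fin d)}
    (hx : x ∈ cset Q) (hy : y ∈ cset Q) : dist x y ≤ Real.sqrt d * szR Q.1 := by
  have hco : ∀ t, dist (x t) (y t) ≤ szR Q.1 := by
    intro t
    have hfl : ⌊(2:ℝ)^Q.1 * x t⌋ = ⌊(2:ℝ)^Q.1 * y t⌋ := by
      have h1 : fl Q.1 x t = Q.2 t := congrFun hx t
      have h2 : fl Q.1 y t = Q.2 t := congrFun hy t
      unfold fl at h1 h2
      rw [h1, h2]
    have h2l : (0:ℝ) < (2:ℝ)^Q.1 := by positivity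
    have hb1 : |(2:ℝ)^Q.1 * x t - (2:ℝ)^Q.1 * y t| < 1 := by
      rw [abs_sub_lt_iff]
      constructor
      · have := Int.floor_le ((2:ℝ)^Q.1 * y t)
        have := Int.lt_floor_add_one ((2:ℝ)^Q.1 * x t)
        rw [hfl] at *
        push_cast at *
        linarith
      · have := Int.floor_le ((2:ℝ)^Q.1 * x t)
        have := Int.lt_floor_add_one ((2:ℝ)^Q.1 * y t)
        rw [hfl] at *
        push_cast at *
        linarith
    have : dist (x t) (y t) = |x t - y t| := Real.dist_eq _ _
    rw [this]
    have habs : (2:ℝ)^Q.1 * |x t - y t| < 1 := by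
      calc (2:ℝ)^Q.1 * |x t - y t| = |(2:ℝ)^Q.1 * x t - (2:ℝ)^Q.1 * y t| := by
            rw [← mul_sub, abs_mul, abs_of_pos h2l]
      _ < 1 := hb1
    unfold szR
    rw [inv_eq_one_div]
    refine le_of_lt ((lt_div_iff₀ h2l).mpr ?_)
    rw [mul_comm]
    exact habs
  rw [EuclideanSpace.dist_eq]
  have hsum : (∑ t : Fin d, dist (x t) (y t) ^ 2) ≤ (d : ℝ) * (szR Q.1)^2 := by
    calc (∑ t : Fin d, dist (x t) (y t) ^ 2) ≤ ∑ _t : Fin d, (szR Q.1)^2 := by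
          apply Finset.sum_le_sum
          intro i _
          exact pow_le_pow_left₀ dist_nonneg (hco i) 2
    _ = (d : ℝ) * (szR Q.1)^2 := by
          rw [Finset.sum_const, Finset.card_univ, Fintype.card_fin, nsmul_eq_mul]
  calc Real.sqrt (∑ t : Fin d, dist (x t) (y t) ^ 2) ≤ Real.sqrt ((d:ℝ) * (szR Q.1)^2) :=
        Real.sqrt_le_sqrt hsum
  _ = Real.sqrt d * szR Q.1 := by
        rw [Real.sqrt_mul (Nat.cast_nonneg d), Real.sqrt_sq (le_of_lt (szR_pos Q.1))]

lemma diam_cset_le (Q : Cube d) :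
    EMetric.diam (cset Q) ≤ ENNReal.ofReal (Real.sqrt d * szR Q.1) := by
  apply EMetric.diam_le
  intro x hx y hy
  rw [edist_dist]
  exact ENNReal.ofReal_le_ofReal (dist_le_of_mem_cset hx hy)

lemma diam_pow_le_costq {q : ℝ} (hq : 0 < q) (Q : Cube d) :
    EMetric.diam (cset Q) ^ q ≤ costq q Q :=
  ENNReal.rpow_le_rpow (diam_cset_le Q) (le_of_lt hq)

/-- a set of small diameter meets at most `3^d` cubes of a given level -/
lemma fl_mem_offsets {y₀ y : EuclideanSpace ℝ (Fin d)} {l : ℕ}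
    (h : dist y y₀ ≤ ((2:ℝ)^l)⁻¹) :
    fl l y ∈ Finset.image
      (fun e : Fin d → Fin 3 => fun t => fl l y₀ t + (e t : ℤ) - 1) Finset.univ := by
  have h2l : (0:ℝ) < (2:ℝ)^l := by positivity
  have hrange : ∀ t, fl l y₀ t - 1 ≤ fl l y t ∧ fl l y t ≤ fl l y₀ t + 1 := by
    intro t
    have hct : dist (y t) (y₀ t) ≤ ((2:ℝ)^l)⁻¹ := le_trans (coord_dist_le y y₀ t) h
    have habs : |(2:ℝ)^l * y t - (2:ℝ)^l * y₀ t| ≤ 1 := by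
      rw [← mul_sub, abs_mul, abs_of_pos h2l]
      rw [Real.dist_eq] at hct
      calc (2:ℝ)^l * |y t - y₀ t| ≤ (2:ℝ)^l * ((2:ℝ)^l)⁻¹ :=
            mul_le_mul_of_nonneg_left hct (le_of_lt h2l)
      _ = 1 := mul_inv_cancel₀ (ne_of_gt h2l)
    rw [abs_sub_le_iff] at habs
    constructor
    · unfold fl
      have : ((fl l y₀ t - 1 : ℤ) : ℝ) ≤ (2:ℝ)^l * y t := by
        unfold fl
        push_cast
        have := Int.floor_le ((2:ℝ)^l * y₀ t)
        linarith [habs.2]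
      exact Int.le_floor.mpr this
    · have h2 : fl l y t < fl l y₀ t + 1 + 1 := by
        unfold fl
        apply Int.floor_lt.mpr
        push_cast
        have := Int.lt_floor_add_one ((2:ℝ)^l * y₀ t)
        linarith [habs.1]
      omega
  have pf : ∀ t, (fl l y t - fl l y₀ t + 1).toNat < 3 := by
    intro t
    have := hrange t
    omega
  refine Finset.mem_image.mpr ⟨fun t => ⟨(fl l y t - fl l y₀ t + 1).toNat, pf t⟩,
    Finset.mem_univ _, ?_⟩
  funext t
  simp only
  have h0 : (0:ℤ) ≤ fl l y t - fl l y₀ t + 1 := by have := hrange t; omega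
  rw [Int.toNat_of_nonneg h0]
  ring


/-! ### flow and min-cut machinery -/

open scoped Classical

lemma sum_union_le' {α : Type*} [DecidableEq α] (s t : Finset α) (f : α → ℝ≥0∞) :
    ∑ a ∈ s ∪ t, f a ≤ ∑ a ∈ s, f a + ∑ a ∈ t, f a := by
  have := Finset.sum_union_inter (s₁ := s) (s₂ := t) (f := f)
  calc ∑ a ∈ s ∪ t, f a ≤ ∑ a ∈ s ∪ t, f a + ∑ a ∈ s ∩ t, f a := le_self_add
  _ = _ := this

lemma sum_biUnion_le' {ι α : Type*} [DecidableEq α] (s : Finset ι) (t : ι → Finset α)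
    (f : α → ℝ≥0∞) : ∑ a ∈ s.biUnion t, f a ≤ ∑ i ∈ s, ∑ a ∈ t i, f a := by
  induction s using Finset.induction with
  | empty => simp
  | @insert i s hi ih =>
      rw [Finset.biUnion_insert, Finset.sum_insert hi]
      exact le_trans (sum_union_le' _ _ f) (add_le_add_right ih _)

variable (c : Cube d → ℝ≥0∞) (T : ℝ≥0∞) (q : ℝ)

/-- sum of masses of all ancestors (up to level 0) -/
noncomputable def ptl (Q : Cube d) : ℝ≥0∞ := ∑ k ∈ Finset.range (Q.1+1), c (up k Q)

/-- threshold-crossing cubes -/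
def Sink (Q : Cube d) : Prop := T < ptl c Q ∧ (Q.1 = 0 ∨ ptl c (up 1 Q) ≤ T)

def Desc (S P : Cube d) : Prop := P.1 ≤ S.1 ∧ up (S.1 - P.1) S = P

lemma desc_refl (S : Cube d) : Desc S S := ⟨le_refl _, by simpa using up_zero S⟩

lemma desc_level {S P : Cube d} (h : Desc S P) : P.1 ≤ S.1 := h.1

lemma desc_up {S : Cube d} {k : ℕ} (hk : k ≤ S.1) : Desc S (up k S) := by
  refine ⟨by show S.1 - k ≤ S.1; omega, ?_⟩
  have : S.1 - (up k S).1 = k := by show S.1 - (S.1 - k) = k; omega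
  rw [this]

lemma eq_of_desc_level {S P : Cube d} (h : Desc S P) (hl : S.1 ≤ P.1) : S = P := by
  have h1 : S.1 = P.1 := le_antisymm hl h.1
  have := h.2
  rw [h1] at this
  simpa [up_zero] using this

lemma desc_of_desc_child {S P : Cube d} {δ : Fin d → Bool} (h : Desc S (child P δ)) :
    Desc S P := by
  have hc : (child P δ).1 = P.1 + 1 := rfl
  have hl : P.1 + 1 ≤ S.1 := by rw [← hc]; exact h.1
  refine ⟨by omega, ?_⟩
  have h22 : up (S.1 - (P.1+1)) S = child P δ := by rw [← hc]; exact h.2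
  have h2 : up 1 (up (S.1 - (P.1+1)) S) = up (S.1 - (P.1+1) + 1) S := up_up 1 _ S
  have h3 : S.1 - (P.1+1) + 1 = S.1 - P.1 := by omega
  rw [h3] at h2
  rw [← h2, h22, up_one_child]

lemma desc_child_of_desc {S P : Cube d} (h : Desc S P) (hne : S ≠ P) :
    ∃ δ, Desc S (child P δ) := by
  have hl : P.1 ≤ S.1 := h.1
  have hlt : P.1 < S.1 := by
    rcases lt_or_eq_of_le hl with h1 | h1
    · exact h1
    · exact absurd (eq_of_desc_level h (le_of_eq h1.symm)) hne
  set M := up (S.1 - P.1 - 1) S with hM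
  have hMl : M.1 = P.1 + 1 := by show S.1 - (S.1 - P.1 - 1) = P.1 + 1; omega
  have hMP : up 1 M = P := by
    rw [hM, up_up]
    have : S.1 - P.1 - 1 + 1 = S.1 - P.1 := by omega
    rw [this, h.2]
  obtain ⟨δ, hδ⟩ := exists_child (Q := M) (l := P.1) hMl
  rw [hMP] at hδ
  refine ⟨δ, ?_, ?_⟩
  · show (child P δ).1 ≤ S.1
    have : (child P δ).1 = P.1 + 1 := rfl
    omega
  · show up (S.1 - (child P δ).1) S = child P δ
    have hc : (child P δ).1 = P.1 + 1 := rfl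
    rw [hc, hδ, hM]
    congr 1

lemma ptl_up_le {Q : Cube d} {k : ℕ} (hk : k ≤ Q.1) : ptl c (up k Q) ≤ ptl c Q := by
  unfold ptl
  have hn : (up k Q).1 = Q.1 - k := rfl
  have heq : ∀ j, c (up j (up k Q)) = c (up (k + j) Q) := fun j => by rw [up_up]
  calc ∑ j ∈ Finset.range ((up k Q).1 + 1), c (up j (up k Q))
      = ∑ j ∈ Finset.range (Q.1 - k + 1), c (up (k + j) Q) := by
        rw [hn]; exact Finset.sum_congr rfl (fun j _ => heq j)
  _ = ∑ i ∈ Finset.Ico k (k + (Q.1 - k + 1)), c (up i Q) := by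
        rw [Finset.sum_Ico_eq_sum_range]
        simp [add_comm]
  _ ≤ ∑ i ∈ Finset.range (Q.1 + 1), c (up i Q) := by
        apply Finset.sum_le_sum_of_subset
        intro i hi
        simp only [Finset.mem_Ico] at hi
        simp only [Finset.mem_range]
        omega

lemma not_sink_up {Q : Cube d} (hs : Sink c T Q) {k : ℕ} (hk1 : 1 ≤ k) (hk : k ≤ Q.1) :
    ¬ Sink c T (up k Q) := by
  intro hs2
  rcases hs.2 with h0 | hle
  · omega
  · have h1 : up k Q = up (k - 1) (up 1 Q) := by rw [up_up]; congr 1; omega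
    have h2 : ptl c (up (k-1) (up 1 Q)) ≤ ptl c (up 1 Q) := by
      apply ptl_up_le
      show k - 1 ≤ Q.1 - 1
      omega
    have := hs2.1
    rw [h1] at this
    exact absurd (lt_of_lt_of_le this (le_trans h2 hle)) (lt_irrefl T)

lemma not_sink_desc {S P : Cube d} (hP : Sink c T P) (hd : Desc S P) (hne : S ≠ P) :
    ¬ Sink c T S := by
  intro hS
  have hl : P.1 ≤ S.1 := hd.1
  have hlt : P.1 < S.1 := by
    rcases lt_or_eq_of_le hl with h1 | h1
    · exact h1
    · exact absurd (eq_of_desc_level hd (le_of_eq h1.symm)) hne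
  have := not_sink_up c T hS (k := S.1 - P.1) (by omega) (by omega)
  rw [hd.2] at this
  exact this hP

/-- finite-depth max-flow value -/
noncomputable def mf : ℕ → Cube d → ℝ≥0∞
  | 0, Q => if Sink c T Q then costq q Q else 0
  | (k+1), Q => if Sink c T Q then costq q Q
      else min (costq q Q) (∑ δ : Fin d → Bool, mf k (child Q δ))

lemma mf_le_costq (k : ℕ) (Q : Cube d) : mf c T q k Q ≤ costq q Q := by
  cases k with
  | zero =>
      show (if Sink c T Q then costq q Q else 0) ≤ _
      split <;> simp
  | succ k =>
      show (if Sink c T Q then costq q Q else min (costq q Q) _) ≤ _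
      split
      · exact le_refl _
      · exact min_le_left _ _

lemma mf_ne_top {hq : 0 < q} (k : ℕ) (Q : Cube d) : mf c T q k Q ≠ ⊤ :=
  fun h => costq_ne_top hq Q (top_unique (h ▸ mf_le_costq c T q k Q))

lemma mf_zero_of_no_sink (k : ℕ) (Q : Cube d)
    (h : ∀ S, Desc S Q → ¬ Sink c T S) : mf c T q k Q = 0 := by
  induction k generalizing Q with
  | zero =>
      show (if Sink c T Q then costq q Q else 0) = 0
      rw [if_neg (h Q (desc_refl Q))]
  | succ k ih =>
      show (if Sink c T Q then costq q Q else min (costq q Q) _) = 0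
      rw [if_neg (h Q (desc_refl Q))]
      have : ∀ δ : Fin d → Bool, mf c T q k (child Q δ) = 0 := by
        intro δ
        exact ih (child Q δ) (fun S hS => h S (desc_of_desc_child hS))
      simp [this]

/-- the min-cut: a finite family of cubes of total cost at most `mf`, covering all
sinks below `P` of depth within the budget. -/
lemma cut_exists (hq : 0 < q) : ∀ (k : ℕ) (P : Cube d), ∃ F : Finset (Cube d),
    (∑ Q ∈ F, costq q Q) ≤ mf c T q k P ∧
    ∀ S, Sink c T S → Desc S P → S.1 ≤ P.1 + k → ∃ Q ∈ F, Desc S Q := by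
  intro k
  induction k with
  | zero =>
      intro P
      by_cases hs : Sink c T P
      · refine ⟨{P}, ?_, ?_⟩
        · show ∑ Q ∈ {P}, costq q Q ≤ (if Sink c T P then costq q P else 0)
          rw [if_pos hs, Finset.sum_singleton]
        · intro S hS hd hl
          have : S = P := eq_of_desc_level hd (by omega)
          exact ⟨P, Finset.mem_singleton_self P, this ▸ hd⟩
      · refine ⟨∅, ?_, ?_⟩
        · simp
        · intro S hS hd hl
          have : S = P := eq_of_desc_level hd (by omega)
          exact absurd (this ▸ hS) hs
  | succ k ih =>
      intro P
      by_cases hs : Sink c T P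
      · refine ⟨{P}, ?_, ?_⟩
        · show ∑ Q ∈ {P}, costq q Q ≤ (if Sink c T P then costq q P else _)
          rw [if_pos hs, Finset.sum_singleton]
        · intro S hS hd hl
          exact ⟨P, Finset.mem_singleton_self P, hd⟩
      · by_cases hm : costq q P ≤ ∑ δ : Fin d → Bool, mf c T q k (child P δ)
        · refine ⟨{P}, ?_, ?_⟩
          · show ∑ Q ∈ {P}, costq q Q ≤ (if Sink c T P then costq q P else min (costq q P) _)
            rw [if_neg hs, Finset.sum_singleton, min_eq_left hm]
          · intro S hS hd hl
            exact ⟨P, Finset.mem_singleton_self P, hd⟩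
        · choose F hF1 hF2 using fun δ : Fin d → Bool => ih (child P δ)
          refine ⟨Finset.univ.biUnion F, ?_, ?_⟩
          · calc ∑ Q ∈ Finset.univ.biUnion F, costq q Q
                ≤ ∑ δ : Fin d → Bool, ∑ Q ∈ F δ, costq q Q := sum_biUnion_le' _ _ _
            _ ≤ ∑ δ : Fin d → Bool, mf c T q k (child P δ) := Finset.sum_le_sum (fun δ _ => hF1 δ)
            _ = mf c T q (k+1) P := by
                show _ = (if Sink c T P then costq q P else min (costq q P) _)
                rw [if_neg hs, min_eq_right (le_of_not_ge hm)]
          · intro S hS hd hl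
            have hne : S ≠ P := fun h => hs (h ▸ hS)
            obtain ⟨δ, hδ⟩ := desc_child_of_desc hd hne
            obtain ⟨Q, hQ1, hQ2⟩ := hF2 δ S hS hδ (by
              show S.1 ≤ (child P δ).1 + k
              show S.1 ≤ (P.1 + 1) + k
              omega)
            exact ⟨Q, Finset.mem_biUnion.mpr ⟨δ, Finset.mem_univ δ, hQ1⟩, hQ2⟩


variable (T' : ℕ) (root : Cube d)

/-- the max flow, distributed down the tree proportionally -/
noncomputable def flw : (l : ℕ) → (Fin d → ℤ) → ℝ≥0∞
  | 0, z => if (0, z) = root then mf c T q T' root else 0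
  | (l+1), z =>
      let Ssum := ∑ δ : Fin d → Bool, mf c T q (T' - (l+1)) (child (up 1 (l+1, z)) δ)
      if Ssum = 0 then 0
      else flw l (up 1 ((l+1 : ℕ), z)).2 * mf c T q (T' - (l+1)) (l+1, z) / Ssum

noncomputable def flwQ (Q : Cube d) : ℝ≥0∞ := flw c T q T' root Q.1 Q.2

lemma flwQ_zero (z : Fin d → ℤ) :
    flwQ c T q T' root (0, z) = if (0, z) = root then mf c T q T' root else 0 := rfl

lemma flwQ_succ (l : ℕ) (z : Fin d → ℤ) :
    flwQ c T q T' root (l+1, z) =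
      (if (∑ δ : Fin d → Bool, mf c T q (T' - (l+1)) (child (up 1 (l+1, z)) δ)) = 0 then 0
      else flwQ c T q T' root (up 1 ((l+1 : ℕ), z)) * mf c T q (T' - (l+1)) (l+1, z) /
        (∑ δ : Fin d → Bool, mf c T q (T' - (l+1)) (child (up 1 (l+1, z)) δ))) := by
  have : (up 1 ((l+1 : ℕ), z)).1 = l := rfl
  show flw c T q T' root (l+1) z = _
  rw [flw]
  rfl

lemma sum_mf_ne_top (hq : 0 < q) (k : ℕ) (P : Cube d) :
    (∑ δ : Fin d → Bool, mf c T q k (child P δ)) ≠ ⊤ := by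
  rw [← lt_top_iff_ne_top]
  apply ENNReal.sum_lt_top.mpr
  intro δ _
  rw [lt_top_iff_ne_top]
  exact mf_ne_top c T q (hq := hq) k (child P δ)

lemma sink_children_mf_zero {P : Cube d} (hs : Sink c T P) (k : ℕ) (δ : Fin d → Bool) :
    mf c T q k (child P δ) = 0 := by
  apply mf_zero_of_no_sink
  intro S hS
  have hd : Desc S P := desc_of_desc_child hS
  have hne : S ≠ P := by
    intro h
    have h1 : (child P δ).1 ≤ S.1 := hS.1
    have h2 : (child P δ).1 = P.1 + 1 := rfl
    rw [h] at h1
    omega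
  exact not_sink_desc c T hs hd hne

lemma flw_le_mf (hq : 0 < q) : ∀ (l : ℕ) (z : Fin d → ℤ),
    flwQ c T q T' root (l, z) ≤ mf c T q (T' - l) (l, z) := by
  intro l
  induction l with
  | zero =>
      intro z
      rw [flwQ_zero]
      split
      · next h => rw [h]; exact le_refl _
      · exact zero_le
  | succ l ih =>
      intro z
      rw [flwQ_succ]
      set P : Cube d := up 1 ((l+1 : ℕ), z) with hP
      set Ssum := ∑ δ : Fin d → Bool, mf c T q (T' - (l+1)) (child P δ) with hSsum
      split
      · exact zero_le
      · next hS0 =>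
        have hStop : Ssum ≠ ⊤ := sum_mf_ne_top c T q hq _ _
        have hPl : P.1 = l := rfl
        have hflwP : flwQ c T q T' root P ≤ mf c T q (T' - l) P := by
          have := ih P.2
          have hPP : ((l : ℕ), P.2) = P := rfl
          rw [hPP] at this
          exact this
        have hPnotsink : ¬ Sink c T P := by
          intro hs
          apply hS0
          rw [hSsum]
          apply Finset.sum_eq_zero
          intro δ _
          exact sink_children_mf_zero c T q hs _ δ
        have hle : flwQ c T q T' root P ≤ Ssum := by
          rcases le_or_gt T' l with hl | hl
          · -- deep case : T' - l = 0 and mf 0 P = 0 since P is not a sink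
            have h0 : T' - l = 0 := by omega
            have : mf c T q (T' - l) P = 0 := by
              rw [h0]
              show (if Sink c T P then costq q P else 0) = 0
              rw [if_neg hPnotsink]
            exact le_trans hflwP (le_of_eq this) |>.trans (zero_le)
          · -- shallow case : mf (T'-l) P = min cost Ssum ≤ Ssum
            have h1 : T' - l = (T' - (l+1)) + 1 := by omega
            have : mf c T q (T' - l) P = min (costq q P) Ssum := by
              rw [h1]
              show (if Sink c T P then costq q P else min (costq q P) _) = _
              rw [if_neg hPnotsink]
            exact le_trans hflwP (le_trans (le_of_eq this) (min_le_right _ _))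
        calc flwQ c T q T' root P * mf c T q (T' - (l+1)) (l+1, z) / Ssum
            ≤ Ssum * mf c T q (T' - (l+1)) (l+1, z) / Ssum := by
              gcongr
        _ = mf c T q (T' - (l+1)) (l+1, z) := by
              rw [mul_comm, mul_div_assoc, ENNReal.div_self hS0 hStop, mul_one]

lemma flwQ_le_costq (hq : 0 < q) (Q : Cube d) : flwQ c T q T' root Q ≤ costq q Q := by
  have := flw_le_mf c T q T' root hq Q.1 Q.2
  have hQ : ((Q.1 : ℕ), Q.2) = Q := rfl
  rw [hQ] at this
  exact le_trans this (mf_le_costq c T q _ Q)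

lemma conservation {l : ℕ} (zP : Fin d → ℤ) (hl : l < T')
    (hns : ¬ Sink c T ((l : ℕ), zP)) (hq : 0 < q) :
    ∑ δ : Fin d → Bool, flwQ c T q T' root (child ((l : ℕ), zP) δ) =
      flwQ c T q T' root ((l : ℕ), zP) := by
  set P : Cube d := ((l : ℕ), zP) with hPdef
  have hup : ∀ δ : Fin d → Bool, up 1 (child P δ) = P := fun δ => up_one_child P δ
  set Ssum := ∑ δ : Fin d → Bool, mf c T q (T' - (l+1)) (child P δ) with hSsum
  have hunfold : ∀ δ : Fin d → Bool, flwQ c T q T' root (child P δ) =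
      (if Ssum = 0 then 0 else
        flwQ c T q T' root P * mf c T q (T' - (l+1)) (child P δ) / Ssum) := by
    intro δ
    have h1 : child P δ = ((l+1 : ℕ), (child P δ).2) := rfl
    rw [h1, flwQ_succ]
    have h2 : up 1 ((l+1 : ℕ), (child P δ).2) = P := hup δ
    rw [h2]
  have hmfP : mf c T q (T' - l) P = if Sink c T P then costq q P else min (costq q P) Ssum := by
    have h1 : T' - l = (T' - (l+1)) + 1 := by omega
    rw [h1]
    rfl
  by_cases hS0 : Ssum = 0
  · have hrhs : flwQ c T q T' root P = 0 := by
      have h1 := flw_le_mf c T q T' root hq l zP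
      rw [← hPdef] at h1
      rw [hmfP, if_neg hns, hS0] at h1
      simpa using h1
    rw [hrhs]
    apply Finset.sum_eq_zero
    intro δ _
    rw [hunfold δ, if_pos hS0]
  · have hStop : Ssum ≠ ⊤ := sum_mf_ne_top c T q hq _ _
    calc ∑ δ : Fin d → Bool, flwQ c T q T' root (child P δ)
        = ∑ δ : Fin d → Bool, flwQ c T q T' root P * mf c T q (T' - (l+1)) (child P δ) / Ssum := by
          apply Finset.sum_congr rfl
          intro δ _
          rw [hunfold δ, if_neg hS0]
    _ = (∑ δ : Fin d → Bool, flwQ c T q T' root P * mf c T q (T' - (l+1)) (child P δ)) * Ssum⁻¹ := by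
          rw [Finset.sum_mul]
          apply Finset.sum_congr rfl
          intro δ _
          rw [div_eq_mul_inv]
    _ = flwQ c T q T' root P * Ssum * Ssum⁻¹ := by rw [← Finset.mul_sum, ← hSsum]
    _ = flwQ c T q T' root P := by
          rw [mul_assoc, ENNReal.mul_inv_cancel hS0 hStop, mul_one]


/-! ### telescoping the flow down the levels -/

def sunk (Q : Cube d) : Prop := ∃ k, k ≤ Q.1 ∧ Sink c T (up k Q)

lemma sunk_zero (z : Fin d → ℤ) : sunk c T ((0 : ℕ), z) ↔ Sink c T ((0 : ℕ), z) := by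
  constructor
  · rintro ⟨k, hk, hs⟩
    have : k = 0 := by omega
    rw [this, up_zero] at hs
    exact hs
  · intro h
    exact ⟨0, le_refl _, by rw [up_zero]; exact h⟩

lemma sunk_succ {l : ℕ} {z : Fin d → ℤ} (hns : ¬ Sink c T ((l+1 : ℕ), z)) :
    sunk c T ((l+1 : ℕ), z) ↔ sunk c T (up 1 ((l+1 : ℕ), z)) := by
  constructor
  · rintro ⟨k, hk, hs⟩
    have hk0 : k ≠ 0 := by
      intro h
      rw [h, up_zero] at hs
      exact hns hs
    refine ⟨k - 1, ?_, ?_⟩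
    · show k - 1 ≤ (l + 1) - 1
      omega
    · rw [up_up]
      have : 1 + (k - 1) = k := by omega
      rw [this]
      exact hs
  · rintro ⟨k, hk, hs⟩
    rw [up_up] at hs
    refine ⟨1 + k, ?_, hs⟩
    have : (up 1 ((l+1:ℕ), z)).1 = l := rfl
    omega

lemma not_sunk_up_of_sink {l : ℕ} {z : Fin d → ℤ} (hs : Sink c T ((l+1 : ℕ), z)) :
    ¬ sunk c T (up 1 ((l+1 : ℕ), z)) := by
  rintro ⟨k, hk, hk2⟩
  rw [up_up] at hk2
  have hub : (up 1 ((l+1:ℕ), z)).1 = l := rfl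
  exact not_sink_up c T hs (k := 1 + k) (by omega) (by show 1 + k ≤ l + 1; omega) hk2

def childEquiv : ((Fin d → ℤ) × (Fin d → Bool)) ≃ (Fin d → ℤ) where
  toFun p := fun t => 2 * p.1 t + (if p.2 t then 1 else 0)
  invFun z := (fun t => z t / 2^1, fun t => decide (z t % 2 = 1))
  left_inv := by
    rintro ⟨z, δ⟩
    have hdiv : ∀ t, (2 * z t + (if δ t then 1 else 0)) / 2^1 = z t := by
      intro t
      split <;> omega
    have hmod : ∀ t, decide ((2 * z t + (if δ t then 1 else 0)) % 2 = 1) = δ t := by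
      intro t
      rcases Bool.dichotomy (δ t) with h | h <;> rw [h] <;> simp <;> omega
    ext t
    · exact hdiv t
    · simp only
      rw [hmod t]
  right_inv := by
    intro z
    funext t
    simp only [pow_one]
    have h0 : (0:ℤ) ≤ z t % 2 := Int.emod_nonneg _ (by norm_num)
    have h1 : z t % 2 < 2 := Int.emod_lt_of_pos _ (by norm_num)
    have h2 : 2 * (z t / 2) + z t % 2 = z t := Int.mul_ediv_add_emod (z t) 2
    split_ifs with h
    · rw [decide_eq_true_eq] at h
      omega
    · rw [decide_eq_true_eq] at h
      omega

lemma childEquiv_spec (l : ℕ) (p : (Fin d → ℤ) × (Fin d → Bool)) :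
    ((l+1 : ℕ), childEquiv p) = child ((l : ℕ), p.1) p.2 := rfl

lemma childEquiv_up (l : ℕ) (p : (Fin d → ℤ) × (Fin d → Bool)) :
    up 1 ((l+1 : ℕ), childEquiv p) = ((l : ℕ), p.1) := by
  rw [childEquiv_spec, up_one_child]

noncomputable def SL (l : ℕ) : ℝ≥0∞ :=
  ∑' z : Fin d → ℤ, if Sink c T ((l : ℕ), z) then flwQ c T q T' root ((l : ℕ), z) else 0

noncomputable def LV (l : ℕ) : ℝ≥0∞ :=
  ∑' z : Fin d → ℤ, if ¬ sunk c T ((l : ℕ), z) then flwQ c T q T' root ((l : ℕ), z) else 0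

lemma lv_step (hq : 0 < q) {l : ℕ} (hl : l < T') :
    LV c T q T' root l = SL c T q T' root (l+1) + LV c T q T' root (l+1) := by
  have step1 : LV c T q T' root l = ∑' z : Fin d → ℤ, ∑ δ : Fin d → Bool,
      (if ¬ sunk c T ((l:ℕ), z) then flwQ c T q T' root (child ((l:ℕ), z) δ) else 0) := by
    unfold LV
    apply tsum_congr
    intro z
    by_cases h : sunk c T ((l:ℕ), z)
    · simp [h]
    · rw [if_pos h]
      have hns : ¬ Sink c T ((l:ℕ), z) := by
        intro hs
        exact h ⟨0, Nat.zero_le _, by rw [up_zero]; exact hs⟩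
      rw [← conservation c T q T' root z hl hns hq]
      apply Finset.sum_congr rfl
      intro δ _
      rw [if_pos h]
  have step2 : (∑' z : Fin d → ℤ, ∑ δ : Fin d → Bool,
      (if ¬ sunk c T ((l:ℕ), z) then flwQ c T q T' root (child ((l:ℕ), z) δ) else 0)) =
      ∑' z' : Fin d → ℤ,
        (if ¬ sunk c T (up 1 ((l+1:ℕ), z')) then flwQ c T q T' root ((l+1:ℕ), z') else 0) := by
    calc (∑' z : Fin d → ℤ, ∑ δ : Fin d → Bool,
        (if ¬ sunk c T ((l:ℕ), z) then flwQ c T q T' root (child ((l:ℕ), z) δ) else 0))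
        = ∑' z : Fin d → ℤ, ∑' δ : Fin d → Bool,
          (if ¬ sunk c T ((l:ℕ), z) then flwQ c T q T' root (child ((l:ℕ), z) δ) else 0) :=
          tsum_congr (fun z => (tsum_fintype _).symm)
    _ = ∑' p : (Fin d → ℤ) × (Fin d → Bool),
          (if ¬ sunk c T ((l:ℕ), p.1) then flwQ c T q T' root (child ((l:ℕ), p.1) p.2) else 0) :=
          (ENNReal.tsum_prod).symm
    _ = ∑' p : (Fin d → ℤ) × (Fin d → Bool),
          (if ¬ sunk c T (up 1 ((l+1:ℕ), childEquiv p))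
            then flwQ c T q T' root ((l+1:ℕ), childEquiv p) else 0) := by
          apply tsum_congr
          intro p
          have h1 : up 1 ((l+1:ℕ), childEquiv p) = ((l:ℕ), p.1) := childEquiv_up l p
          have h2 : ((l+1:ℕ), childEquiv p) = child ((l:ℕ), p.1) p.2 := childEquiv_spec l p
          rw [h1, h2]
    _ = _ := Equiv.tsum_eq (childEquiv (d := d))
          (fun z' => if ¬ sunk c T (up 1 ((l+1:ℕ), z')) then flwQ c T q T' root ((l+1:ℕ), z') else 0)
  have step3 : ∀ z' : Fin d → ℤ,
      (if ¬ sunk c T (up 1 ((l+1:ℕ), z')) then flwQ c T q T' root ((l+1:ℕ), z') else 0) =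
      (if Sink c T ((l+1:ℕ), z') then flwQ c T q T' root ((l+1:ℕ), z') else 0) +
      (if ¬ sunk c T ((l+1:ℕ), z') then flwQ c T q T' root ((l+1:ℕ), z') else 0) := by
    intro z'
    by_cases hs : Sink c T ((l+1:ℕ), z')
    · rw [if_pos hs]
      rw [if_pos (not_sunk_up_of_sink c T hs)]
      have hsunk : sunk c T ((l+1:ℕ), z') := ⟨0, Nat.zero_le _, by rw [up_zero]; exact hs⟩
      rw [if_neg (not_not_intro hsunk)]
      rw [add_zero]
    · have hiff := sunk_succ c T hs
      rw [if_neg hs, zero_add]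
      by_cases h2 : sunk c T ((l+1:ℕ), z')
      · rw [if_neg (not_not_intro (hiff.mp h2)), if_neg (not_not_intro h2)]
      · rw [if_pos (fun hc => h2 (hiff.mpr hc)), if_pos h2]
  rw [step1, step2]
  calc ∑' z', (if ¬ sunk c T (up 1 ((l+1:ℕ), z')) then flwQ c T q T' root ((l+1:ℕ), z') else 0)
      = ∑' z', ((if Sink c T ((l+1:ℕ), z') then flwQ c T q T' root ((l+1:ℕ), z') else 0) +
        (if ¬ sunk c T ((l+1:ℕ), z') then flwQ c T q T' root ((l+1:ℕ), z') else 0)) :=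
        tsum_congr step3
  _ = _ := ENNReal.tsum_add

lemma lv_last (hq : 0 < q) : LV c T q T' root T' = 0 := by
  unfold LV
  have : ∀ z : Fin d → ℤ,
      (if ¬ sunk c T ((T' : ℕ), z) then flwQ c T q T' root ((T' : ℕ), z) else 0) = 0 := by
    intro z
    split
    · next h =>
      have hns : ¬ Sink c T ((T':ℕ), z) := fun hs => h ⟨0, Nat.zero_le _, by rwa [up_zero]⟩
      have h1 := flw_le_mf c T q T' root hq T' z
      have h2 : T' - T' = 0 := by omega
      rw [h2] at h1
      have h3 : mf c T q 0 ((T':ℕ), z) = 0 := by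
        show (if Sink c T ((T':ℕ), z) then costq q ((T':ℕ),z) else 0) = 0
        rw [if_neg hns]
      rw [h3] at h1
      simpa using h1
    · rfl
  rw [tsum_congr this, tsum_zero]

lemma telescope (hq : 0 < q) (hroot : root.1 = 0) :
    (∑ l ∈ Finset.range (T'+1), SL c T q T' root l) = mf c T q T' root := by
  have base : SL c T q T' root 0 + LV c T q T' root 0 = mf c T q T' root := by
    have hr : ((0:ℕ), root.2) = root := by
      cases' root with a b
      simp only at hroot
      rw [hroot]
    have hfr : flwQ c T q T' root root = mf c T q T' root := by
      rw [← hr, flwQ_zero, if_pos rfl]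
    have hsl : SL c T q T' root 0 =
        if Sink c T root then mf c T q T' root else 0 := by
      unfold SL
      rw [tsum_eq_single root.2]
      · rw [hr]
        by_cases h : Sink c T root
        · rw [if_pos h, if_pos h, hfr]
        · rw [if_neg h, if_neg h]
      · intro z hz
        have : ((0:ℕ), z) ≠ root := by
          intro h
          apply hz
          rw [← h]
        by_cases h : Sink c T ((0:ℕ), z)
        · rw [if_pos h, flwQ_zero, if_neg this]
        · rw [if_neg h]
    have hlv : LV c T q T' root 0 =
        if ¬ Sink c T root then mf c T q T' root else 0 := by
      unfold LV
      rw [tsum_eq_single root.2]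
      · rw [hr]
        have hss : sunk c T root ↔ Sink c T root := by
          have := sunk_zero c T root.2
          rwa [hr] at this
        by_cases h : Sink c T root
        · rw [if_neg (not_not_intro (hss.mpr h)), if_neg (not_not_intro h)]
        · rw [if_pos (fun hc => h (hss.mp hc)), if_pos h]
          exact hfr
      · intro z hz
        have hne : ((0:ℕ), z) ≠ root := fun h => hz (congrArg Prod.snd h)
        split
        · rw [flwQ_zero, if_neg hne]
        · rfl
    by_cases h : Sink c T root
    · rw [hsl, hlv, if_pos h, if_neg (not_not_intro h), add_zero]
    · rw [hsl, hlv, if_neg h, if_pos h, zero_add]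
  have key : ∀ l, l ≤ T' →
      (∑ l' ∈ Finset.range (l+1), SL c T q T' root l') + LV c T q T' root l =
        mf c T q T' root := by
    intro l
    induction l with
    | zero => intro _; simpa using base
    | succ l ih =>
        intro hl
        have h1 := ih (by omega)
        rw [Finset.sum_range_succ, add_assoc, ← lv_step c T q T' root hq (by omega : l < T')]
        exact h1
  have := key T' (le_refl _)
  rw [lv_last c T q T' root hq, add_zero] at this
  exact this


lemma ptl_eq_tsum (S : Cube d) :
    ptl c S = ∑' P : Cube d, if Desc S P then c P else 0 := by
  have hinj : Set.InjOn (fun k => up k S) (Finset.range (S.1+1)) := by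
    intro a ha b hb hab
    simp only [Finset.coe_range, Set.mem_Iio] at ha hb
    have h1 : (up a S).1 = S.1 - a := rfl
    have h2 : (up b S).1 = S.1 - b := rfl
    have := congrArg Prod.fst hab
    simp only [h1, h2] at this
    omega
  rw [tsum_eq_sum (s := (Finset.range (S.1+1)).image (fun k => up k S)) ?_]
  · rw [Finset.sum_image hinj]
    unfold ptl
    apply Finset.sum_congr rfl
    intro k hk
    rw [if_pos (desc_up (by simp only [Finset.mem_range] at hk; omega))]
  · intro P hP
    rw [if_neg]
    intro hd
    apply hP
    rw [Finset.mem_image]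
    exact ⟨S.1 - P.1, by rw [Finset.mem_range]; omega, hd.2⟩

lemma flow_desc_bound (hq : 0 < q) : ∀ (m : ℕ) (P : Cube d), T' ≤ P.1 + m →
    (∑' S : Cube d, if Sink c T S ∧ Desc S P ∧ S.1 ≤ T' then flwQ c T q T' root S else 0)
      ≤ flwQ c T q T' root P := by
  have single : ∀ P : Cube d,
      (∀ S : Cube d, S ≠ P → ¬(Sink c T S ∧ Desc S P ∧ S.1 ≤ T')) →
      (∑' S : Cube d, if Sink c T S ∧ Desc S P ∧ S.1 ≤ T' then flwQ c T q T' root S else 0)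
        ≤ flwQ c T q T' root P := by
    intro P hP
    rw [tsum_eq_single P (fun S hS => if_neg (hP S hS))]
    split
    · exact le_refl _
    · exact zero_le
  intro m
  induction m with
  | zero =>
      intro P hTP
      apply single
      intro S hS ⟨h1, h2, h3⟩
      exact hS (eq_of_desc_level h2 (by omega))
  | succ m ih =>
      intro P hTP
      by_cases hdeep : T' ≤ P.1
      · apply single
        intro S hS ⟨h1, h2, h3⟩
        exact hS (eq_of_desc_level h2 (by omega))
      · by_cases hs : Sink c T P
        · apply single
          intro S hS ⟨h1, h2, h3⟩
          exact not_sink_desc c T hs h2 hS h1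
        · have hsplit : ∀ S : Cube d,
              (if Sink c T S ∧ Desc S P ∧ S.1 ≤ T' then flwQ c T q T' root S else 0) =
              ∑ δ : Fin d → Bool,
                (if Sink c T S ∧ Desc S (child P δ) ∧ S.1 ≤ T'
                  then flwQ c T q T' root S else 0) := by
            intro S
            by_cases hc : Sink c T S ∧ Desc S P ∧ S.1 ≤ T'
            · obtain ⟨h1, h2, h3⟩ := hc
              have hne : S ≠ P := fun h => hs (h ▸ h1)
              obtain ⟨δ₀, hδ₀⟩ := desc_child_of_desc h2 hne
              rw [if_pos ⟨h1, h2, h3⟩]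
              rw [Finset.sum_eq_single δ₀]
              · rw [if_pos ⟨h1, hδ₀, h3⟩]
              · intro δ _ hδne
                rw [if_neg]
                rintro ⟨_, hd, _⟩
                apply hδne
                apply child_injective P
                have e1 : up (S.1 - (child P δ).1) S = child P δ := hd.2
                have e2 : up (S.1 - (child P δ₀).1) S = child P δ₀ := hδ₀.2
                rw [← e1, ← e2]
                rfl
              · intro h
                exact absurd (Finset.mem_univ δ₀) h
            · rw [if_neg hc]
              symm
              apply Finset.sum_eq_zero
              intro δ _
              rw [if_neg]
              rintro ⟨h1, h2, h3⟩
              exact hc ⟨h1, desc_of_desc_child h2, h3⟩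
          calc (∑' S : Cube d, if Sink c T S ∧ Desc S P ∧ S.1 ≤ T'
                  then flwQ c T q T' root S else 0)
              = ∑' S : Cube d, ∑ δ : Fin d → Bool,
                (if Sink c T S ∧ Desc S (child P δ) ∧ S.1 ≤ T'
                  then flwQ c T q T' root S else 0) := tsum_congr hsplit
          _ = ∑ δ : Fin d → Bool, ∑' S : Cube d,
                (if Sink c T S ∧ Desc S (child P δ) ∧ S.1 ≤ T'
                  then flwQ c T q T' root S else 0) :=
                Summable.tsum_finsetSum (fun δ _ => ENNReal.summable)
          _ ≤ ∑ δ : Fin d → Bool, flwQ c T q T' root (child P δ) := by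
                apply Finset.sum_le_sum
                intro δ _
                apply ih
                show T' ≤ (P.1 + 1) + m
                omega
          _ = flwQ c T q T' root P := by
                have hP : P = (P.1, P.2) := rfl
                rw [hP] at hs ⊢
                exact conservation c T q T' root P.2 (by omega) hs hq

/-- the main counting inequality: `T · maxflow ≤ total energy` -/
lemma counting (hq : 0 < q) (hroot : root.1 = 0) :
    T * mf c T q T' root ≤ ∑' Q : Cube d, c Q * costq q Q := by
  classical
  set f : Cube d → ℝ≥0∞ := fun S =>
    if Sink c T S ∧ S.1 ≤ T' then flwQ c T q T' root S else 0 with hf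
  have hSNK : (∑' S : Cube d, f S) = mf c T q T' root := by
    have h1 : (∑' S : Cube d, f S) = ∑ l ∈ Finset.range (T'+1), SL c T q T' root l := by
      have h2 : (∑' S : Cube d, f S) =
          ∑' l : ℕ, ∑' z : Fin d → ℤ, f ((l : ℕ), z) := by
        rw [← ENNReal.tsum_prod]
      rw [h2]
      have h3 : ∀ l : ℕ, (∑' z : Fin d → ℤ, f ((l:ℕ), z)) =
          if l ≤ T' then SL c T q T' root l else 0 := by
        intro l
        by_cases hl : l ≤ T'
        · rw [if_pos hl]
          unfold SL
          apply tsum_congr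
          intro z
          simp only [hf]
          by_cases hsink : Sink c T ((l:ℕ), z)
          · rw [if_pos ⟨hsink, hl⟩, if_pos hsink]
          · rw [if_neg (fun hc => hsink hc.1), if_neg hsink]
        · rw [if_neg hl]
          have hz : ∀ z : Fin d → ℤ, f ((l:ℕ), z) = 0 := by
            intro z
            simp only [hf]
            exact if_neg (fun hc => hl hc.2)
          rw [tsum_congr hz, tsum_zero]
      rw [tsum_congr h3, tsum_eq_sum (s := Finset.range (T'+1))
        (fun l hl => if_neg (by simp only [Finset.mem_range] at hl; omega))]
      apply Finset.sum_congr rfl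
      intro l hl
      rw [if_pos (by simp only [Finset.mem_range] at hl; omega)]
    rw [h1]
    exact telescope c T q T' root hq hroot
  calc T * mf c T q T' root = ∑' S : Cube d, T * f S := by
        rw [← hSNK]
        exact ENNReal.tsum_mul_left.symm
  _ ≤ ∑' S : Cube d, ptl c S * f S := by
        apply ENNReal.tsum_le_tsum
        intro S
        simp only [hf]
        by_cases hc : Sink c T S ∧ S.1 ≤ T'
        · rw [if_pos hc]
          exact mul_le_mul_left (le_of_lt hc.1.1) _
        · rw [if_neg hc, mul_zero, mul_zero]
  _ = ∑' S : Cube d, ∑' P : Cube d, (if Desc S P then c P else 0) * f S := by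
        apply tsum_congr
        intro S
        rw [ptl_eq_tsum, ENNReal.tsum_mul_right]
  _ = ∑' P : Cube d, ∑' S : Cube d, (if Desc S P then c P else 0) * f S :=
        ENNReal.tsum_comm
  _ ≤ ∑' P : Cube d, c P * flwQ c T q T' root P := by
        apply ENNReal.tsum_le_tsum
        intro P
        have h1 : ∀ S : Cube d, (if Desc S P then c P else 0) * f S =
            c P * (if Sink c T S ∧ Desc S P ∧ S.1 ≤ T' then flwQ c T q T' root S else 0) := by
          intro S
          simp only [hf]
          by_cases h1 : Desc S P <;> by_cases h2 : Sink c T S <;> by_cases h3 : S.1 ≤ T' <;>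
            simp [h1, h2, h3]
        rw [tsum_congr h1, ENNReal.tsum_mul_left]
        exact mul_le_mul_right (flow_desc_bound c T q T' root hq T' P (by omega)) _
  _ ≤ ∑' Q : Cube d, c Q * costq q Q := by
        apply ENNReal.tsum_le_tsum
        intro Q
        exact mul_le_mul_right (flwQ_le_costq c T q T' root hq Q) _


/-! ### the per-root covering theorem -/

lemma ptl_chain (y : EuclideanSpace ℝ (Fin d)) (l : ℕ) :
    ptl c (chain y l) = ∑ j ∈ Finset.range (l+1), c (chain y j) := by
  unfold ptl
  have hc1 : (chain y l).1 = l := rfl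
  rw [hc1]
  have h1 : ∀ k ∈ Finset.range (l+1), c (up k (chain y l)) = c (chain y (l - k)) := by
    intro k hk
    rw [up_chain y (by simp only [Finset.mem_range] at hk; omega)]
  rw [Finset.sum_congr rfl h1]
  have h2 := Finset.sum_range_reflect (fun j => c (chain y j)) (l+1)
  rw [← h2]
  apply Finset.sum_congr rfl
  intro k hk
  congr 1

lemma exists_crossing {y : EuclideanSpace ℝ (Fin d)}
    (hy : (∑' l : ℕ, c (chain y l)) = ⊤) (hT : T ≠ ⊤) :
    ∃ l₀ : ℕ, Sink c T (chain y l₀) := by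
  have htendsto : Tendsto (fun l => ptl c (chain y l)) atTop (𝓝 (⊤ : ℝ≥0∞)) := by
    have h1 : Tendsto (fun n => ∑ j ∈ Finset.range n, c (chain y j)) atTop
        (𝓝 (∑' j, c (chain y j))) := ENNReal.tendsto_nat_tsum _
    rw [hy] at h1
    have h2 : Tendsto (fun l : ℕ => l + 1) atTop atTop := tendsto_add_atTop_nat 1
    have h3 := h1.comp h2
    apply h3.congr
    intro l
    exact (ptl_chain c y l).symm
  have hev : ∀ᶠ l in atTop, T < ptl c (chain y l) :=
    htendsto.eventually (eventually_gt_nhds (lt_top_iff_ne_top.mpr hT))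
  have hex : ∃ l, T < ptl c (chain y l) := hev.exists
  classical
  set l₀ := Nat.find hex with hl₀
  refine ⟨l₀, Nat.find_spec hex, ?_⟩
  cases hcase : l₀ with
  | zero => left; rfl
  | succ m =>
      right
      have h1 : up 1 (chain y (m+1)) = chain y m := by
        have := up_chain y (l := m+1) (k := 1) (by omega)
        simpa using this
      rw [h1]
      refine not_lt.mp (Nat.find_min hex ?_)
      omega

/-- the key theorem: the cheapest cube-cover of the divergence set inside a given
top-level cube has zero cost. -/
theorem core_root (hq : 0 < q) (hW : (∑' Q : Cube d, c Q * costq q Q) ≠ ⊤)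
    (root : Cube d) (hroot : root.1 = 0) :
    (⨅ (F : Set (Cube d)) (_ : {y | (∑' l : ℕ, c (chain y l)) = ⊤} ∩ cset root ⊆
        ⋃ Q ∈ F, cset Q), ∑' Q : F, costq q (Q : Cube d)) = 0 := by
  classical
  set G := {y : EuclideanSpace ℝ (Fin d) | (∑' l : ℕ, c (chain y l)) = ⊤} with hG
  set γ := (⨅ (F : Set (Cube d)) (_ : G ∩ cset root ⊆ ⋃ Q ∈ F, cset Q),
    ∑' Q : F, costq q (Q : Cube d)) with hγ
  by_contra hne
  have hcover1 : G ∩ cset root ⊆ ⋃ Q ∈ ({root} : Set (Cube d)), cset Q := by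
    intro y hy
    simp only [Set.mem_iUnion, Set.mem_singleton_iff]
    exact ⟨root, rfl, hy.2⟩
  have hγle : γ ≤ costq q root := by
    rw [hγ]
    refine le_trans (iInf_le _ ({root} : Set (Cube d))) ?_
    refine le_trans (iInf_le _ hcover1) ?_
    rw [tsum_singleton root (costq q)]
  have hγtop : γ ≠ ⊤ := fun h => costq_ne_top hq root (top_unique (h ▸ hγle))
  have hγ2ne : γ / 2 ≠ 0 := by
    simp only [ne_eq, ENNReal.div_eq_zero_iff]
    push_neg
    exact ⟨hne, by norm_num⟩
  have hγ2top : γ / 2 ≠ ⊤ := by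
    simp only [ne_eq, ENNReal.div_eq_top]
    push_neg
    exact ⟨fun _ => by norm_num, fun h => absurd h hγtop⟩
  obtain ⟨n, hn⟩ := ENNReal.exists_nat_gt (r := (∑' Q : Cube d, c Q * costq q Q) / (γ / 2))
    (ENNReal.div_lt_top hW hγ2ne).ne
  by_cases hcase : ∃ T'' : ℕ, γ / 2 ≤ mf c (n : ℝ≥0∞) q T'' root
  · obtain ⟨T'', hT''⟩ := hcase
    have h1 : (n : ℝ≥0∞) * (γ / 2) ≤ ∑' Q : Cube d, c Q * costq q Q :=
      le_trans (mul_le_mul_right hT'' _) (counting c (n : ℝ≥0∞) q T'' root hq hroot)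
    have h2 : (n : ℝ≥0∞) ≤ (∑' Q : Cube d, c Q * costq q Q) / (γ / 2) :=
      (ENNReal.le_div_iff_mul_le (Or.inl hγ2ne) (Or.inl hγ2top)).mpr h1
    exact absurd (lt_of_lt_of_le hn h2) (lt_irrefl _)
  · push_neg at hcase
    choose F hF1 hF2 using fun T'' : ℕ => cut_exists c (n : ℝ≥0∞) q hq T'' root
    have hFsmall : ∀ T'' : ℕ, (∑ Q ∈ F T'', costq q Q) ≤ γ / 2 :=
      fun T'' => le_trans (hF1 T'') (le_of_lt (hcase T''))
    -- diagonal argument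
    set u : ℕ → (Cube d → Bool) := fun T'' Q => decide (Q ∈ F T'') with hu
    obtain ⟨χ, _, φ, hφmono, hφtend⟩ :=
      IsCompact.tendsto_subseq (x := u) isCompact_univ (fun n => Set.mem_univ _)
    have hconv : ∀ Q : Cube d, ∀ᶠ k in atTop, u (φ k) Q = χ Q := by
      intro Q
      have h1 : Tendsto (fun k => u (φ k) Q) atTop (𝓝 (χ Q)) := by
        have := tendsto_pi_nhds.mp hφtend Q
        exact this
      rw [nhds_discrete] at h1
      exact tendsto_pure.mp h1
    set C : Set (Cube d) := {Q | χ Q = true} with hC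
    have hcov : G ∩ cset root ⊆ ⋃ Q ∈ C, cset Q := by
      rintro y ⟨hyG, hyroot⟩
      obtain ⟨l₀, hl₀⟩ := exists_crossing c (n : ℝ≥0∞) hyG (by simp)
      have hchain0 : chain y 0 = root := by
        have := chain_eq_of_mem hyroot
        rw [hroot] at this
        exact this
      have hdesc : Desc (chain y l₀) root := by
        refine ⟨by rw [hroot]; omega, ?_⟩
        show up ((chain y l₀).1 - root.1) (chain y l₀) = root
        rw [hroot]
        have h2 : (chain y l₀).1 = l₀ := rfl
        rw [h2]
        have h3 : l₀ - 0 = l₀ := by omega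
        rw [h3, up_chain y (le_refl l₀)]
        have h4 : l₀ - l₀ = 0 := by omega
        rw [h4, hchain0]
      -- pigeonhole over the finitely many ancestors
      have hanc : ∀ᶠ k in atTop, ∃ j ≤ l₀, up j (chain y l₀) ∈ F (φ k) := by
        have hφat : Tendsto φ atTop atTop := hφmono.tendsto_atTop
        filter_upwards [hφat.eventually_ge_atTop l₀] with k hk
        obtain ⟨Q, hQF, hQd⟩ := hF2 (φ k) (chain y l₀) hl₀ hdesc
          (by rw [hroot]; show (chain y l₀).1 ≤ 0 + φ k; show l₀ ≤ 0 + φ k; omega)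
        refine ⟨l₀ - Q.1, ?_, ?_⟩
        · have := hQd.1
          show l₀ - Q.1 ≤ l₀
          omega
        · have h5 : (chain y l₀).1 = l₀ := rfl
          have := hQd.2
          rw [h5] at this
          rw [this]
          exact hQF
      have hpig : ∃ j ≤ l₀, ∃ᶠ k in atTop, up j (chain y l₀) ∈ F (φ k) := by
        by_contra hcon
        push_neg at hcon
        have hev : ∀ᶠ k in atTop, ∀ j ∈ Finset.range (l₀+1),
            up j (chain y l₀) ∉ F (φ k) := by
          rw [eventually_all_finset]
          intro j hj
          have := hcon j (by simp only [Finset.mem_range] at hj; omega)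
          exact this
        obtain ⟨k, hk1, hk2⟩ := (hanc.and hev).exists
        obtain ⟨j, hj1, hj2⟩ := hk1
        exact hk2 j (Finset.mem_range.mpr (by omega)) hj2
      obtain ⟨j, hjle, hjfreq⟩ := hpig
      have hχ : χ (up j (chain y l₀)) = true := by
        have h6 := (hjfreq.and_eventually (hconv (up j (chain y l₀)))).exists
        obtain ⟨k, hk1, hk2⟩ := h6
        rw [← hk2, hu]
        simp only [decide_eq_true_eq]
        exact hk1
      refine Set.mem_iUnion.mpr ⟨up j (chain y l₀), Set.mem_iUnion.mpr ⟨hχ, ?_⟩⟩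
      apply cset_subset_up j (by show j ≤ (chain y l₀).1; exact hjle)
      exact mem_cset_chain y l₀
    have hcost : (∑' Q : C, costq q (Q : Cube d)) ≤ γ / 2 := by
      rw [ENNReal.tsum_eq_iSup_sum]
      apply iSup_le
      intro s
      set s' : Finset (Cube d) := s.image Subtype.val with hs'
      have h7 : (∑ a ∈ s, costq q (a : Cube d)) = ∑ Q ∈ s', costq q Q := by
        rw [hs', Finset.sum_image (by intro a _ b _ h; exact Subtype.val_injective h)]
      rw [h7]
      have h8 : ∀ᶠ k in atTop, ∀ Q ∈ s', Q ∈ F (φ k) := by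
        rw [eventually_all_finset]
        intro Q hQ
        have hQC : χ Q = true := by
          rw [hs'] at hQ
          obtain ⟨a, _, rfl⟩ := Finset.mem_image.mp hQ
          exact a.2
        filter_upwards [hconv Q] with k hk
        rw [hQC] at hk
        rw [hu] at hk
        simpa using hk
      obtain ⟨k, hk⟩ := h8.exists
      calc (∑ Q ∈ s', costq q Q) ≤ ∑ Q ∈ F (φ k), costq q Q := by
            apply Finset.sum_le_sum_of_subset
            intro Q hQ
            exact hk Q hQ
      _ ≤ γ / 2 := hFsmall (φ k)
    have : γ ≤ γ / 2 := by
      rw [hγ]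
      exact le_trans (le_trans (iInf_le _ C) (iInf_le _ hcov)) hcost
    exact absurd (lt_of_le_of_lt this (ENNReal.half_lt_self hne hγtop)) (lt_irrefl _)


lemma rpow_le_of_pow_le {x y : ℝ≥0∞} (hq : 0 < q) (h : x ^ q ≤ y) : x ≤ y ^ (1/q) := by
  have h1 : (x ^ q) ^ (1/q) ≤ y ^ (1/q) := ENNReal.rpow_le_rpow h (by positivity)
  rwa [← ENNReal.rpow_mul, mul_one_div, div_self (ne_of_gt hq), ENNReal.rpow_one] at h1

theorem core_global (hq : 0 < q) (hW : (∑' Q : Cube d, c Q * costq q Q) ≠ ⊤) :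
    μH[q] {y : EuclideanSpace ℝ (Fin d) | (∑' l : ℕ, c (chain y l)) = ⊤} = 0 := by
  classical
  set G := {y : EuclideanSpace ℝ (Fin d) | (∑' l : ℕ, c (chain y l)) = ⊤} with hGdef
  obtain ⟨e, he⟩ := exists_injective_nat (Fin d → ℤ)
  set ε : ℕ → (Fin d → ℤ) → ℝ≥0∞ := fun p z₀ => (2⁻¹ : ℝ≥0∞)^p * (2⁻¹ : ℝ≥0∞)^(e z₀) with hε
  have hεne : ∀ p z₀, ε p z₀ ≠ 0 := by
    intro p z₀
    rw [hε]
    simp only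
    apply mul_ne_zero <;> 
      exact pow_ne_zero _ (by simp)
  -- extract covers
  have hex : ∀ (p : ℕ) (z₀ : Fin d → ℤ), ∃ F : Set (Cube d),
      (G ∩ cset ((0:ℕ), z₀) ⊆ ⋃ Q ∈ F, cset Q) ∧
      (∑' Q : F, costq q (Q : Cube d)) ≤ ε p z₀ := by
    intro p z₀
    have h0 := core_root c q hq hW ((0:ℕ), z₀) rfl
    have hlt : (⨅ (F : Set (Cube d)) (_ : G ∩ cset ((0:ℕ), z₀) ⊆ ⋃ Q ∈ F, cset Q),
        ∑' Q : F, costq q (Q : Cube d)) < ε p z₀ := by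
      rw [hGdef, h0]
      exact pos_iff_ne_zero.mpr (hεne p z₀)
    obtain ⟨F, hF⟩ := iInf_lt_iff.mp hlt
    obtain ⟨hcov, hcost⟩ := iInf_lt_iff.mp hF
    exact ⟨F, hcov, le_of_lt hcost⟩
  choose F hFcov hFcost using hex
  -- index types and covers for the Hausdorff bound
  set ι : ℕ → Type := fun p => (z₀ : Fin d → ℤ) × ↥(F p z₀) with hι
  haveI : ∀ p, Countable (ι p) := by
    intro p
    rw [hι]
    infer_instance
  set t : (p : ℕ) → ι p → Set (EuclideanSpace ℝ (Fin d)) :=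
    fun p i => cset (i.2 : Cube d) with ht
  set r : ℕ → ℝ≥0∞ := fun p => ((2⁻¹ : ℝ≥0∞)^p) ^ (1/q) with hr
  have costq_le : ∀ (p : ℕ) (z₀ : Fin d → ℤ) (Q : F p z₀),
      costq q (Q : Cube d) ≤ (2⁻¹ : ℝ≥0∞)^p := by
    intro p z₀ Q
    calc costq q (Q : Cube d) ≤ ∑' Q' : F p z₀, costq q (Q' : Cube d) := ENNReal.le_tsum Q
    _ ≤ ε p z₀ := hFcost p z₀
    _ ≤ (2⁻¹ : ℝ≥0∞)^p := by
        rw [hε]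
        simp only
        calc (2⁻¹ : ℝ≥0∞)^p * (2⁻¹:ℝ≥0∞)^(e z₀) ≤ (2⁻¹ : ℝ≥0∞)^p * 1 := by
              apply mul_le_mul_right
              exact pow_le_one' (by simp [ENNReal.inv_le_one]) _
        _ = (2⁻¹ : ℝ≥0∞)^p := mul_one _
  have hdiam : ∀ (p : ℕ) (i : ι p), EMetric.diam (t p i) ≤ r p := by
    intro p i
    rw [ht, hr]
    apply rpow_le_of_pow_le q hq
    calc EMetric.diam (cset (i.2 : Cube d)) ^ q ≤ costq q (i.2 : Cube d) :=
          diam_pow_le_costq hq _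
    _ ≤ (2⁻¹ : ℝ≥0∞)^p := costq_le p i.1 i.2
  have hrtend : Tendsto r atTop (𝓝 0) := by
    rw [ENNReal.tendsto_nhds_zero]
    intro δ hδ
    have hδq : (0:ℝ≥0∞) < δ ^ q := by
      rw [pos_iff_ne_zero]
      intro h
      rw [ENNReal.rpow_eq_zero_iff] at h
      rcases h with ⟨h1, _⟩ | ⟨_, h2⟩
      · exact absurd h1 (ne_of_gt hδ)
      · exact absurd h2 (not_lt.mpr (le_of_lt hq))
    have hpow : Tendsto (fun p : ℕ => (2⁻¹ : ℝ≥0∞)^p) atTop (𝓝 0) :=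
      ENNReal.tendsto_pow_atTop_nhds_zero_of_lt_one (by
        rw [ENNReal.inv_lt_one]
        exact one_lt_two)
    have hev := (ENNReal.tendsto_nhds_zero.mp hpow) (δ ^ q) hδq
    filter_upwards [hev] with p hp
    rw [hr]
    calc ((2⁻¹ : ℝ≥0∞)^p) ^ (1/q) ≤ (δ ^ q) ^ (1/q) :=
          ENNReal.rpow_le_rpow hp (by positivity)
    _ = δ := by
          rw [← ENNReal.rpow_mul, mul_one_div, div_self (ne_of_gt hq), ENNReal.rpow_one]
  have hst : ∀ p : ℕ, G ⊆ ⋃ i : ι p, t p i := by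
    intro p y hy
    have h1 : y ∈ cset ((0:ℕ), fl 0 y) := mem_cset_chain y 0
    have h2 : y ∈ G ∩ cset ((0:ℕ), fl 0 y) := ⟨hy, h1⟩
    have h3 := hFcov p (fl 0 y) h2
    rw [Set.mem_iUnion₂] at h3
    obtain ⟨Q, hQF, hQy⟩ := h3
    exact Set.mem_iUnion.mpr ⟨⟨fl 0 y, ⟨Q, hQF⟩⟩, hQy⟩
  have hsum : ∀ p : ℕ, (∑' i : ι p, EMetric.diam (t p i) ^ q) ≤ (2⁻¹ : ℝ≥0∞)^p * 2 := by
    intro p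
    calc (∑' i : ι p, EMetric.diam (t p i) ^ q)
        ≤ ∑' i : ι p, costq q ((i.2 : Cube d)) := by
          apply ENNReal.tsum_le_tsum
          intro i
          rw [ht]
          exact diam_pow_le_costq hq _
    _ = ∑' z₀ : Fin d → ℤ, ∑' Q : F p z₀, costq q (Q : Cube d) :=
          ENNReal.tsum_sigma (fun z₀ (Q : (F p z₀)) => costq q (Q : Cube d))
    _ ≤ ∑' z₀ : Fin d → ℤ, ε p z₀ := ENNReal.tsum_le_tsum (fun z₀ => hFcost p z₀)
    _ = (2⁻¹:ℝ≥0∞)^p * ∑' z₀ : Fin d → ℤ, (2⁻¹:ℝ≥0∞)^(e z₀) := by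
          rw [hε, ENNReal.tsum_mul_left]
    _ ≤ (2⁻¹:ℝ≥0∞)^p * ∑' n : ℕ, (2⁻¹:ℝ≥0∞)^n := by
          apply mul_le_mul_right
          exact ENNReal.tsum_comp_le_tsum_of_injective he _
    _ = (2⁻¹:ℝ≥0∞)^p * 2 := by
          rw [ENNReal.tsum_geometric]
          congr 1
          rw [show (1 : ℝ≥0∞) - 2⁻¹ = 2⁻¹ from ENNReal.one_sub_inv_two]
          rw [inv_inv]
  have hmain := Measure.hausdorffMeasure_le_liminf_tsum (X := EuclideanSpace ℝ (Fin d)) q G r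
    hrtend t (Eventually.of_forall hdiam) (Eventually.of_forall hst)
  have hliminf : (liminf (fun p => ∑' i : ι p, EMetric.diam (t p i) ^ q) atTop) = 0 := by
    have h1 : Tendsto (fun p : ℕ => (2⁻¹ : ℝ≥0∞)^p * 2) atTop (𝓝 0) := by
      have := ENNReal.Tendsto.mul_const
        (ENNReal.tendsto_pow_atTop_nhds_zero_of_lt_one
          (show (2⁻¹ : ℝ≥0∞) < 1 by rw [ENNReal.inv_lt_one]; exact one_lt_two))
        (Or.inr (show (2:ℝ≥0∞) ≠ ⊤ by simp))
      simpa using this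
    apply le_antisymm ?_ (zero_le)
    calc liminf (fun p => ∑' i : ι p, EMetric.diam (t p i) ^ q) atTop
        ≤ liminf (fun p : ℕ => (2⁻¹ : ℝ≥0∞)^p * 2) atTop :=
          liminf_le_liminf (Eventually.of_forall hsum)
    _ = 0 := h1.liminf_eq
  replace hmain := hmain.trans_eq hliminf
  exact le_antisymm hmain (zero_le)


/-! ### the source-side lemma : slices with vanishing cover cost are null -/

lemma slice_null {n d : ℕ} {v : EuclideanSpace ℝ (Fin n) → EuclideanSpace ℝ (Fin d)}
    {E : Set (EuclideanSpace ℝ (Fin n))} {μ : ℝ} (hμ : 0 ≤ μ)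
    (D : ℕ → ℕ → Set (EuclideanSpace ℝ (Fin n)))
    (hDcov : ∀ k, E ⊆ ⋃ j, D k j) (y : EuclideanSpace ℝ (Fin d))
    (htend : Tendsto (fun k => ∑' j : ℕ,
      (if y ∈ v '' (D k j) then EMetric.diam (D k j) ^ μ else 0)) atTop (𝓝 0)) :
    μH[μ] (E ∩ v ⁻¹' {y}) = 0 := by
  classical
  set h : ℕ → ℝ≥0∞ := fun k => ∑' j : ℕ,
    (if y ∈ v '' (D k j) then EMetric.diam (D k j) ^ μ else 0) with hh
  have hterm : ∀ k j, y ∈ v '' (D k j) → EMetric.diam (D k j) ^ μ ≤ h k := by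
    intro k j hj
    rw [hh]
    calc EMetric.diam (D k j) ^ μ
        = (if y ∈ v '' (D k j) then EMetric.diam (D k j) ^ μ else 0) := (if_pos hj).symm
    _ ≤ _ := ENNReal.le_tsum j
  have hcov : ∀ k, E ∩ v ⁻¹' {y} ⊆ ⋃ j : ↥{j : ℕ | y ∈ v '' (D k j)}, D k j.1 := by
    intro k x hx
    obtain ⟨j, hj⟩ := Set.mem_iUnion.mp (hDcov k hx.1)
    have hyim : y ∈ v '' (D k j) := by
      refine ⟨x, hj, ?_⟩
      have := hx.2
      simpa using this
    exact Set.mem_iUnion.mpr ⟨⟨j, hyim⟩, hj⟩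
  rcases eq_or_lt_of_le hμ with hμ0 | hμpos
  · -- μ = 0 : the slice must be empty
    have hev : ∀ᶠ k in atTop, h k ≤ 2⁻¹ :=
      (ENNReal.tendsto_nhds_zero.mp htend) 2⁻¹ (by simp)
    obtain ⟨k, hk⟩ := hev.exists
    have hempty : E ∩ v ⁻¹' {y} = ∅ := by
      rw [Set.eq_empty_iff_forall_notMem]
      intro x hx
      obtain ⟨j, hj⟩ := Set.mem_iUnion.mp (hDcov k hx.1)
      have hyim : y ∈ v '' (D k j) := ⟨x, hj, by simpa using hx.2⟩
      have h1 : EMetric.diam (D k j) ^ μ = 1 := by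
        rw [← hμ0, ENNReal.rpow_zero]
      have h2 : (1:ℝ≥0∞) ≤ h k := h1 ▸ hterm k j hyim
      have h3 : (2⁻¹ : ℝ≥0∞) < 1 := by
        rw [ENNReal.inv_lt_one]
        exact one_lt_two
      exact absurd (lt_of_lt_of_le h3 (le_trans h2 hk)) (lt_irrefl _)
    rw [hempty]
    exact measure_empty
  · -- μ > 0
    apply le_antisymm ?_ (zero_le)
    have hdiam : ∀ k (j : ↥{j : ℕ | y ∈ v '' (D k j)}),
        EMetric.diam (D k j.1) ≤ (h k) ^ (1/μ) := by
      intro k j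
      exact rpow_le_of_pow_le μ hμpos (hterm k j.1 j.2)
    have hrtend : Tendsto (fun k => (h k) ^ (1/μ)) atTop (𝓝 0) := by
      rw [ENNReal.tendsto_nhds_zero]
      intro δ hδ
      have hδμ : (0:ℝ≥0∞) < δ ^ μ := by
        rw [pos_iff_ne_zero]
        intro hcon
        rw [ENNReal.rpow_eq_zero_iff] at hcon
        rcases hcon with ⟨h1, _⟩ | ⟨_, h2⟩
        · exact absurd h1 (ne_of_gt hδ)
        · exact absurd h2 (not_lt.mpr (le_of_lt hμpos))
      filter_upwards [(ENNReal.tendsto_nhds_zero.mp htend) (δ ^ μ) hδμ] with k hk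
      calc (h k) ^ (1/μ) ≤ (δ ^ μ) ^ (1/μ) := ENNReal.rpow_le_rpow hk (by positivity)
      _ = δ := by
          rw [← ENNReal.rpow_mul, mul_one_div, div_self (ne_of_gt hμpos), ENNReal.rpow_one]
    have hmain := Measure.hausdorffMeasure_le_liminf_tsum μ (E ∩ v ⁻¹' {y})
      (fun k => (h k) ^ (1/μ)) hrtend (fun k (j : ↥{j : ℕ | y ∈ v '' (D k j)}) => D k j.1)
      (Eventually.of_forall hdiam) (Eventually.of_forall hcov)
    have hsub : ∀ k, (∑' j : ↥{j : ℕ | y ∈ v '' (D k j)}, EMetric.diam (D k j.1) ^ μ) ≤ h k := by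
      intro k
      rw [hh]
      have := tsum_subtype {j : ℕ | y ∈ v '' (D k j)} (fun j => EMetric.diam (D k j) ^ μ)
      rw [this]
      apply ENNReal.tsum_le_tsum
      intro j
      rw [Set.indicator_apply]
      split <;> simp_all
  
    calc μH[μ] (E ∩ v ⁻¹' {y})
        ≤ liminf (fun k => ∑' j : ↥{j : ℕ | y ∈ v '' (D k j)},
            EMetric.diam (D k j.1) ^ μ) atTop := hmain
    _ ≤ liminf h atTop := liminf_le_liminf (Eventually.of_forall hsub)
    _ = 0 := htend.liminf_eq


/-! ### the target-side lemma : the divergence set of a family of weighted sets is null -/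

lemma divergence_null {d : ℕ} {q : ℝ} (hq : 0 < q)
    (A : ℕ × ℕ → Set (EuclideanSpace ℝ (Fin d))) (cc : ℕ × ℕ → ℝ≥0∞)
    (hW : (∑' i : ℕ × ℕ, cc i * EMetric.diam (A i) ^ q) ≠ ⊤) :
    μH[q] {y | (∑' i : ℕ × ℕ, (if y ∈ A i then cc i else 0)) = ⊤} = 0 := by
  classical
  haveI : NullSingletonClass (μH[q] : Measure (EuclideanSpace ℝ (Fin d))) :=
    Measure.noAtoms_hausdorff _ hq
  set m : ℕ × ℕ → ℝ≥0∞ := fun i => EMetric.diam (A i) ^ q with hm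
  set good : ℕ × ℕ → Prop := fun i => EMetric.diam (A i) ≠ 0 ∧ EMetric.diam (A i) < 1
    with hgood
  -- the zero-diameter part is null
  set NZ : Set (EuclideanSpace ℝ (Fin d)) :=
    ⋃ (i : ℕ × ℕ) (_ : EMetric.diam (A i) = 0), A i with hNZ
  have hNZnull : μH[q] NZ = 0 := by
    rw [hNZ]
    apply measure_iUnion_null
    intro i
    by_cases hP : EMetric.diam (A i) = 0
    · apply measure_mono_null (Set.iUnion_subset (fun _ => subset_rfl))
      exact (EMetric.diam_eq_zero_iff.mp hP).measure_zero _
    · have : (⋃ (_ : EMetric.diam (A i) = 0), A i) = ∅ := by simp [hP]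
      rw [this]
      exact measure_empty
  -- data for good indices
  have hgne : ∀ i, good i → (A i).Nonempty := by
    intro i hi
    rcases (A i).eq_empty_or_nonempty with h1 | h1
    · exfalso
      apply hi.1
      rw [h1]
      exact EMetric.diam_empty
    · exact h1
  set ai : ℕ × ℕ → EuclideanSpace ℝ (Fin d) :=
    fun i => if h : (A i).Nonempty then h.choose else 0 with hai
  have hai_mem : ∀ i, good i → ai i ∈ A i := by
    intro i hi
    rw [hai]
    simp only [dif_pos (hgne i hi)]
    exact (hgne i hi).choose_spec
  set dR : ℕ × ℕ → ℝ := fun i => (EMetric.diam (A i)).toReal with hdR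
  have hdtop : ∀ i, good i → EMetric.diam (A i) ≠ ⊤ :=
    fun i hi => (lt_of_lt_of_le hi.2 le_top).ne
  have hdRpos : ∀ i, good i → 0 < dR i :=
    fun i hi => ENNReal.toReal_pos hi.1 (hdtop i hi)
  have hlvex : ∀ i, good i → ∃ l : ℕ, ((2:ℝ)^(l+1))⁻¹ < dR i := by
    intro i hi
    obtain ⟨nn, hnn⟩ := exists_pow_lt_of_lt_one (hdRpos i hi)
      (show (2:ℝ)⁻¹ < 1 by norm_num)
    refine ⟨nn, lt_of_le_of_lt ?_ (by rwa [inv_pow] at hnn)⟩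
    apply inv_anti₀ (by positivity)
    apply pow_le_pow_right₀ (by norm_num)
    omega
  set lv : ℕ × ℕ → ℕ := fun i => if h : good i then Nat.find (hlvex i h) else 0 with hlv
  have hlva : ∀ i (hi : good i), ((2:ℝ)^(lv i + 1))⁻¹ < dR i := by
    intro i hi
    rw [hlv]
    simp only [dif_pos hi]
    exact Nat.find_spec (hlvex i hi)
  have hlvb : ∀ i (hi : good i), dR i ≤ ((2:ℝ)^(lv i))⁻¹ := by
    intro i hi
    rw [hlv]
    simp only [dif_pos hi]
    cases hfind : Nat.find (hlvex i hi) with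
    | zero =>
        have h1 : dR i ≤ 1 := by
          rw [hdR]
          simp only
          calc (EMetric.diam (A i)).toReal ≤ (1 : ℝ≥0∞).toReal :=
            ENNReal.toReal_mono (by simp) (le_of_lt hi.2)
          _ = 1 := by simp
        simpa using h1
    | succ mm =>
        have h2 := Nat.find_min (hlvex i hi) (m := mm) (by omega)
        push_neg at h2
        exact h2
  -- the dyadicized mass
  set c : Cube d → ℝ≥0∞ := fun Q => ∑' i : ℕ × ℕ,
    (if (good i ∧ Q.1 = lv i ∧ (cset Q ∩ A i).Nonempty) then cc i else 0) with hc
  -- energy bound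
  set Cd : ℝ≥0∞ := (ENNReal.ofReal (2 * Real.sqrt d)) ^ q with hCd
  have hCdtop : Cd ≠ ⊤ := ENNReal.rpow_ne_top_of_nonneg (le_of_lt hq) ENNReal.ofReal_ne_top
  have henergy : (∑' Q : Cube d, c Q * costq q Q) ≤ (3^d : ℕ) * Cd *
      (∑' i : ℕ × ℕ, cc i * m i) := by
    have h1 : ∀ Q : Cube d, c Q * costq q Q = ∑' i : ℕ × ℕ,
        (if (good i ∧ Q.1 = lv i ∧ (cset Q ∩ A i).Nonempty) then cc i * costq q Q else 0) := by
      intro Q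
      rw [hc]
      simp only
      rw [← ENNReal.tsum_mul_right]
      apply tsum_congr
      intro i
      split <;> simp
    rw [tsum_congr h1, ENNReal.tsum_comm]
    have h2 : ∀ i : ℕ × ℕ, (∑' Q : Cube d,
        (if (good i ∧ Q.1 = lv i ∧ (cset Q ∩ A i).Nonempty) then cc i * costq q Q else 0))
        ≤ (3^d : ℕ) * Cd * (cc i * m i) := by
      intro i
      by_cases hi : good i
      · -- the finset of candidate cubes
        set QF : Finset (Cube d) := Finset.image
          (fun e : Fin d → Fin 3 =>
            (((lv i : ℕ), fun t => fl (lv i) (ai i) t + (e t : ℤ) - 1) : Cube d))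
          Finset.univ with hQF
        set κ : ℝ≥0∞ := (ENNReal.ofReal (Real.sqrt d * szR (lv i))) ^ q with hκ
        have hmem : ∀ Q : Cube d,
            (good i ∧ Q.1 = lv i ∧ (cset Q ∩ A i).Nonempty) → Q ∈ QF := by
          rintro Q ⟨_, hQ1, ⟨y', hy'c, hy'A⟩⟩
          have hda : dist y' (ai i) ≤ ((2:ℝ)^(lv i))⁻¹ := by
            have he1 : edist y' (ai i) ≤ EMetric.diam (A i) :=
              EMetric.edist_le_diam_of_mem hy'A (hai_mem i hi)
            have he2 : dist y' (ai i) ≤ dR i := by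
              rw [hdR, dist_edist]
              exact ENNReal.toReal_mono (hdtop i hi) he1
            exact le_trans he2 (hlvb i hi)
          have hfl := fl_mem_offsets (y₀ := ai i) (y := y') (l := lv i) hda
          have hQeq : Q = ((lv i : ℕ), fl (lv i) y') := by
            have := chain_eq_of_mem hy'c
            rw [← this, hQ1]
            rfl
          rw [hQF, hQeq]
          obtain ⟨e, _, he⟩ := Finset.mem_image.mp hfl
          apply Finset.mem_image.mpr
          exact ⟨e, Finset.mem_univ e, by rw [he]⟩
        have hcostQ : ∀ Q : Cube d, Q.1 = lv i → costq q Q = κ := by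
          intro Q hQ1
          rw [hκ]
          unfold costq
          rw [hQ1]
        have hbound : ∀ Q : Cube d,
            (if (good i ∧ Q.1 = lv i ∧ (cset Q ∩ A i).Nonempty) then cc i * costq q Q else 0)
            ≤ (if Q ∈ QF then cc i * κ else 0) := by
          intro Q
          by_cases hcond : good i ∧ Q.1 = lv i ∧ (cset Q ∩ A i).Nonempty
          · rw [if_pos hcond, if_pos (hmem Q hcond), hcostQ Q hcond.2.1]
          · rw [if_neg hcond]
            exact zero_le
        calc (∑' Q : Cube d,
            (if (good i ∧ Q.1 = lv i ∧ (cset Q ∩ A i).Nonempty) then cc i * costq q Q else 0))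
            ≤ ∑' Q : Cube d, (if Q ∈ QF then cc i * κ else 0) := ENNReal.tsum_le_tsum hbound
        _ = ∑ Q ∈ QF, cc i * κ := tsum_eq_sum (fun Q hQ => if_neg hQ) |>.trans
              (Finset.sum_congr rfl (fun Q hQ => if_pos hQ))
        _ = (QF.card : ℝ≥0∞) * (cc i * κ) := by
              rw [Finset.sum_const, nsmul_eq_mul]
        _ ≤ ((3^d : ℕ) : ℝ≥0∞) * (cc i * κ) := by
              apply mul_le_mul_left
              have hcard : QF.card ≤ 3^d := by
                rw [hQF]
                calc (Finset.image _ Finset.univ).card ≤ (Finset.univ : Finset (Fin d → Fin 3)).card :=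
                      Finset.card_image_le
                _ = 3^d := by
                      rw [Finset.card_univ, Fintype.card_fun]
                      simp
              exact_mod_cast hcard
        _ ≤ ((3^d : ℕ) : ℝ≥0∞) * (cc i * (Cd * m i)) := by
              apply mul_le_mul_right
              apply mul_le_mul_right
              -- κ ≤ Cd * m i
              rw [hκ, hCd, hm]
              have hsz : Real.sqrt d * szR (lv i) ≤ (2 * Real.sqrt d) * dR i := by
                unfold szR
                have h5 : ((2:ℝ)^(lv i))⁻¹ = 2 * ((2:ℝ)^(lv i + 1))⁻¹ := by
                  rw [pow_succ]
                  field_simp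
                rw [h5]
                have h6 := le_of_lt (hlva i hi)
                calc Real.sqrt d * (2 * ((2:ℝ)^(lv i + 1))⁻¹)
                    = (2 * Real.sqrt d) * ((2:ℝ)^(lv i + 1))⁻¹ := by ring
                _ ≤ (2 * Real.sqrt d) * dR i := by
                      apply mul_le_mul_of_nonneg_left h6 (by positivity)
              calc (ENNReal.ofReal (Real.sqrt d * szR (lv i))) ^ q
                  ≤ (ENNReal.ofReal ((2 * Real.sqrt d) * dR i)) ^ q :=
                    ENNReal.rpow_le_rpow (ENNReal.ofReal_le_ofReal hsz) (le_of_lt hq)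
              _ = ((ENNReal.ofReal (2 * Real.sqrt d)) * ENNReal.ofReal (dR i)) ^ q := by
                    rw [ENNReal.ofReal_mul (by positivity)]
              _ = ((ENNReal.ofReal (2 * Real.sqrt d)) * EMetric.diam (A i)) ^ q := by
                    rw [hdR]
                    simp only
                    rw [ENNReal.ofReal_toReal (hdtop i hi)]
              _ = (ENNReal.ofReal (2 * Real.sqrt d)) ^ q * EMetric.diam (A i) ^ q :=
                    ENNReal.mul_rpow_of_nonneg _ _ (le_of_lt hq)
        _ = (3^d : ℕ) * Cd * (cc i * m i) := by ring
      · have hz : ∀ Q : Cube d,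
            (if (good i ∧ Q.1 = lv i ∧ (cset Q ∩ A i).Nonempty) then cc i * costq q Q else 0)
              = 0 := by
          intro Q
          rw [if_neg (fun hcond => hi hcond.1)]
        rw [tsum_congr hz, tsum_zero]
        exact zero_le
    calc (∑' (i : ℕ × ℕ) (Q : Cube d),
        (if (good i ∧ Q.1 = lv i ∧ (cset Q ∩ A i).Nonempty) then cc i * costq q Q else 0))
        ≤ ∑' i : ℕ × ℕ, (3^d : ℕ) * Cd * (cc i * m i) := ENNReal.tsum_le_tsum h2
    _ = (3^d : ℕ) * Cd * (∑' i : ℕ × ℕ, cc i * m i) := ENNReal.tsum_mul_left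
  have hWstar : (∑' Q : Cube d, c Q * costq q Q) ≠ ⊤ := by
    intro htop
    rw [htop] at henergy
    have := top_le_iff.mp henergy
    have h3top : ((3^d : ℕ) : ℝ≥0∞) * Cd * (∑' i : ℕ × ℕ, cc i * m i) ≠ ⊤ := by
      apply ENNReal.mul_ne_top
      apply ENNReal.mul_ne_top
      · simp
      · exact hCdtop
      · exact hW
    exact h3top this
  -- the divergence set of the dyadic masses is null
  have hGnull := core_global c q hq hWstar
  -- inclusion of the original divergence set
  apply measure_mono_null ?_ (measure_union_null hNZnull hGnull)
  intro y hy
  simp only [Set.mem_setOf_eq] at hy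
  set f0 : ℕ × ℕ → ℝ≥0∞ := fun i =>
    if (EMetric.diam (A i) = 0 ∧ y ∈ A i) then cc i else 0 with hf0
  set fbig : ℕ × ℕ → ℝ≥0∞ := fun i =>
    if (1 ≤ EMetric.diam (A i) ∧ y ∈ A i) then cc i else 0 with hfbig
  set fgood : ℕ × ℕ → ℝ≥0∞ := fun i =>
    if (good i ∧ y ∈ A i) then cc i else 0 with hfg
  have hsplit : ∀ i : ℕ × ℕ, (if y ∈ A i then cc i else 0) = f0 i + fbig i + fgood i := by
    intro i
    rw [hf0, hfbig, hfg]
    simp only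
    by_cases hyA : y ∈ A i
    · rcases eq_or_ne (EMetric.diam (A i)) 0 with hd0 | hd0
      · rw [if_pos hyA, if_pos ⟨hd0, hyA⟩,
          if_neg (fun hcon => by rw [hd0] at hcon; exact absurd hcon.1 (by simp)),
          if_neg (fun hcon => hcon.1.1 hd0)]
        simp
      · rcases lt_or_ge (EMetric.diam (A i)) 1 with hd1 | hd1
        · rw [if_pos hyA, if_neg (fun hcon => hd0 hcon.1),
            if_neg (fun hcon => absurd (lt_of_le_of_lt hcon.1 hd1) (lt_irrefl _)),
            if_pos ⟨⟨hd0, hd1⟩, hyA⟩]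
          simp
        · rw [if_pos hyA, if_neg (fun hcon => hd0 hcon.1), if_pos ⟨hd1, hyA⟩,
            if_neg (fun hcon => absurd (lt_of_le_of_lt hd1 hcon.1.2) (lt_irrefl _))]
          simp
    · rw [if_neg hyA, if_neg (fun hcon => hyA hcon.2), if_neg (fun hcon => hyA hcon.2),
        if_neg (fun hcon => hyA hcon.2)]
      simp
  have hbigfin : (∑' i : ℕ × ℕ, fbig i) ≠ ⊤ := by
    intro htop
    have hle : (∑' i : ℕ × ℕ, fbig i) ≤ ∑' i : ℕ × ℕ, cc i * m i := by
      apply ENNReal.tsum_le_tsum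
      intro i
      rw [hfbig]
      simp only
      split
      · next hcon =>
        have h1 : (1:ℝ≥0∞) ≤ m i := by
          rw [hm]
          simp only
          calc (1:ℝ≥0∞) = 1 ^ q := (ENNReal.one_rpow q).symm
          _ ≤ EMetric.diam (A i) ^ q := ENNReal.rpow_le_rpow hcon.1 (le_of_lt hq)
        calc cc i = cc i * 1 := (mul_one _).symm
        _ ≤ cc i * m i := mul_le_mul_right h1 _
      · exact zero_le
    rw [htop] at hle
    exact hW (top_le_iff.mp hle)
  have hsum3 : (∑' i : ℕ × ℕ, f0 i) + (∑' i : ℕ × ℕ, fbig i) + (∑' i : ℕ × ℕ, fgood i) = ⊤ := by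
    rw [← ENNReal.tsum_add, ← ENNReal.tsum_add]
    rw [← tsum_congr hsplit]
    exact hy
  have hcases : (∑' i : ℕ × ℕ, f0 i) = ⊤ ∨ (∑' i : ℕ × ℕ, fgood i) = ⊤ := by
    by_contra hcon
    push_neg at hcon
    have := ENNReal.add_ne_top.mpr ⟨ENNReal.add_ne_top.mpr ⟨hcon.1, hbigfin⟩, hcon.2⟩
    exact this hsum3
  rcases hcases with hc0 | hcg
  · -- y lies in a zero-diameter set
    left
    have : ∃ i : ℕ × ℕ, EMetric.diam (A i) = 0 ∧ y ∈ A i := by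
      by_contra hcon
      push_neg at hcon
      have hz : ∀ i : ℕ × ℕ, f0 i = 0 := by
        intro i
        rw [hf0]
        simp only
        rw [if_neg]
        rintro ⟨h1, h2⟩
        exact absurd h2 (hcon i h1)
      rw [tsum_congr hz, tsum_zero] at hc0
      exact absurd hc0 (by simp)
    obtain ⟨i, hi1, hi2⟩ := this
    rw [hNZ]
    exact Set.mem_iUnion₂.mpr ⟨i, hi1, hi2⟩
  · -- y lies in the dyadic divergence set
    right
    show (∑' l : ℕ, c (chain y l)) = ⊤
    have hle : (∑' i : ℕ × ℕ, fgood i) ≤ ∑' l : ℕ, c (chain y l) := by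
      calc (∑' i : ℕ × ℕ, fgood i) ≤ ∑' (i : ℕ × ℕ) (l : ℕ),
        (if (good i ∧ (chain y l).1 = lv i ∧ (cset (chain y l) ∩ A i).Nonempty)
            then cc i else 0) := by
            apply ENNReal.tsum_le_tsum
            intro i
            rw [hfg]
            simp only
            by_cases hcond : good i ∧ y ∈ A i
            · rw [if_pos hcond]
              have hterm : (if (good i ∧ (chain y (lv i)).1 = lv i ∧
                  (cset (chain y (lv i)) ∩ A i).Nonempty) then cc i else 0) = cc i := by
                rw [if_pos]
                exact ⟨hcond.1, rfl, ⟨y, mem_cset_chain y (lv i), hcond.2⟩⟩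
              calc cc i = _ := hterm.symm
              _ ≤ _ := ENNReal.le_tsum (lv i)
            · rw [if_neg hcond]
              exact zero_le
      _ = ∑' (l : ℕ) (i : ℕ × ℕ),
          (if (good i ∧ (chain y l).1 = lv i ∧ (cset (chain y l) ∩ A i).Nonempty)
            then cc i else 0) := ENNReal.tsum_comm
      _ = ∑' l : ℕ, c (chain y l) := by
            apply tsum_congr
            intro l
            rw [hc]
    rw [hcg] at hle
    exact top_le_iff.mp hle

end HKKaux


open MeasureTheory

/-- The mixed Hausdorff-type set function (dd5). -/
noncomputable def Phi {n d : ℕ} (v : EuclideanSpace ℝ (Fin n) → EuclideanSpace ℝ (Fin d))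
    (μ q : ℝ) (E : Set (EuclideanSpace ℝ (Fin n))) : ENNReal :=
  ⨅ (D : ℕ → Set (EuclideanSpace ℝ (Fin n))) (_ : ∀ j, IsCompact (D j))
    (_ : E ⊆ ⋃ j, D j),
    ∑' j, EMetric.diam (D j) ^ μ * EMetric.diam (v '' D j) ^ q

theorem stmt_9 (n d : ℕ) (v : EuclideanSpace ℝ (Fin n) → EuclideanSpace ℝ (Fin d))
    (hv : Continuous v) (μ q : ℝ) (hμ : 0 ≤ μ) (hq : 0 < q)
    (E : Set (EuclideanSpace ℝ (Fin n))) (hE : Phi v μ q E = 0) :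
    ∀ᵐ y ∂(μH[q] : Measure (EuclideanSpace ℝ (Fin d))),
      μH[μ] (E ∩ v ⁻¹' {y}) = 0 := by
  classical
  have hcovers : ∀ k : ℕ, ∃ D : ℕ → Set (EuclideanSpace ℝ (Fin n)),
      (∀ j, IsCompact (D j)) ∧ (E ⊆ ⋃ j, D j) ∧
      (∑' j, EMetric.diam (D j) ^ μ * EMetric.diam (v '' (D j)) ^ q) ≤ (2⁻¹:ℝ≥0∞)^k := by
    intro k
    have h1 : Phi v μ q E < (2⁻¹:ℝ≥0∞)^k := by
      rw [hE]
      exact pos_iff_ne_zero.mpr (pow_ne_zero _ (by simp))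
    unfold Phi at h1
    obtain ⟨D, hD⟩ := iInf_lt_iff.mp h1
    obtain ⟨hDc, hD2⟩ := iInf_lt_iff.mp hD
    obtain ⟨hDcov, hD3⟩ := iInf_lt_iff.mp hD2
    exact ⟨D, hDc, hDcov, le_of_lt hD3⟩
  choose D hDcpt hDcov hDsum using hcovers
  set A : ℕ × ℕ → Set (EuclideanSpace ℝ (Fin d)) := fun i => v '' (D i.1 i.2) with hA
  set cc : ℕ × ℕ → ℝ≥0∞ := fun i => EMetric.diam (D i.1 i.2) ^ μ with hcc
  have hW : (∑' i : ℕ × ℕ, cc i * EMetric.diam (A i) ^ q) ≠ ⊤ := by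
    have h1 : (∑' i : ℕ × ℕ, cc i * EMetric.diam (A i) ^ q) ≤ ∑' k : ℕ, (2⁻¹:ℝ≥0∞)^k := by
      rw [ENNReal.tsum_prod']
      exact ENNReal.tsum_le_tsum (fun k => hDsum k)
    have h2 : (∑' k : ℕ, (2⁻¹:ℝ≥0∞)^k) = 2 := by
      rw [ENNReal.tsum_geometric,
        show (1 : ℝ≥0∞) - 2⁻¹ = 2⁻¹ from ENNReal.one_sub_inv_two, inv_inv]
    rw [h2] at h1
    intro htop
    rw [htop] at h1
    exact (by norm_num : ((2:ℝ≥0∞) ≠ ⊤)) (top_le_iff.mp h1)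
  have hnull := HKKaux.divergence_null hq A cc hW
  rw [MeasureTheory.ae_iff]
  apply measure_mono_null ?_ hnull
  intro y hy
  simp only [Set.mem_setOf_eq] at hy ⊢
  by_contra hFy
  apply hy
  apply HKKaux.slice_null hμ D hDcov y
  have hFh : (∑' (k : ℕ) (j : ℕ),
      (if y ∈ v '' (D k j) then EMetric.diam (D k j) ^ μ else 0)) ≠ ⊤ := by
    intro htop
    apply hFy
    rw [ENNReal.tsum_prod']
    exact htop
  exact ENNReal.tendsto_atTop_zero_of_tsum_ne_top hFh
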